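/- arXiv:2507.15333 — 7 statements merged into one kernel-verified Lean document; each statement's English description precedes it below -/
import Mathlib

section
/- Let 𝓘 be a set of bounded intervals of positive length in ℝ with sup{diam(I) : I ∈ 𝓘} < ∞. Then there exists a subset 𝓢 ⊆ 𝓘 of intervals whose closures are pairwise disjoint, together with a family of subsets {𝓘_S : S ∈ 𝓢} of 𝓘 such that 𝓘 = ⋃_{S∈𝓢} 𝓘_S and, for each S ∈ 𝓢, ⋃𝓘_S ⊆ 5S and ℋ⁰(∂*(⋃𝓘_S)) ≤ ℋ⁰(∂S) = 2, where 5S denotes the interval with the same center as S and five times its length. -/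
open MeasureTheory Metric Set Filter Topology ENNReal NNReal

/-- The measure-theoretic closure of a set `E ⊆ ℝ`:
points where `limsup_{r→0⁺} λ((x-r,x+r) ∩ E)/r > 0`. -/
noncomputable def mclosure1 (E : Set ℝ) : Set ℝ :=
  {x | 0 < limsup (fun r : ℝ =>
      volume (Ioo (x - r) (x + r) ∩ E) / ENNReal.ofReal r) (𝓝[>] (0 : ℝ))}

/-- The measure-theoretic boundary `∂*E = cl*(E) ∩ cl*(ℝ ∖ E)`. -/
noncomputable def mboundary1 (E : Set ℝ) : Set ℝ :=
  mclosure1 E ∩ mclosure1 Eᶜ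

/-- A bounded interval of positive length (open, closed, or half-open). -/
def IsInterval (I : Set ℝ) : Prop :=
  ∃ a b : ℝ, a < b ∧ Ioo a b ⊆ I ∧ I ⊆ Icc a b

lemma mclosure1_congr {U W : Set ℝ} (h : U =ᵐ[volume] W) : mclosure1 U = mclosure1 W := by
  unfold mclosure1
  have : ∀ x r : ℝ, volume (Ioo (x - r) (x + r) ∩ U) = volume (Ioo (x - r) (x + r) ∩ W) := by
    intro x r
    exact measure_congr ((ae_eq_refl _).inter h)
  ext x
  simp only [mem_setOf_eq, this]

lemma not_mem_mclosure1_of_disjoint {E : Set ℝ} {x δ : ℝ} (hδ : 0 < δ)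
    (h : ∀ r : ℝ, 0 < r → r < δ → Ioo (x - r) (x + r) ∩ E = ∅) : x ∉ mclosure1 E := by
  simp only [mclosure1, mem_setOf_eq, not_lt]
  apply Filter.limsup_le_of_le (by isBoundedDefault)
  filter_upwards [Ioo_mem_nhdsGT_of_mem (Set.left_mem_Ico.mpr hδ)] with r hr
  rw [h r hr.1 hr.2, measure_empty, ENNReal.zero_div]

lemma hd_pair {a b : ℝ} (h : a ≠ b) : μH[(0:ℝ)] ({a, b} : Set ℝ) = 2 := by
  rw [show ({a, b} : Set ℝ) = {a} ∪ {b} by rfl,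
    measure_union (Set.disjoint_singleton.mpr h) (measurableSet_singleton b),
    MeasureTheory.Measure.hausdorffMeasure_zero_singleton, MeasureTheory.Measure.hausdorffMeasure_zero_singleton]
  norm_num

lemma hd_pair_le {a b : ℝ} : μH[(0:ℝ)] ({a, b} : Set ℝ) ≤ 2 := by
  refine (measure_union_le {a} {b}).trans ?_
  rw [MeasureTheory.Measure.hausdorffMeasure_zero_singleton, MeasureTheory.Measure.hausdorffMeasure_zero_singleton]
  norm_num

theorem vitali_boundary_one_dim_local (𝓘 : Set (Set ℝ))
    (h𝓘 : ∀ I ∈ 𝓘, IsInterval I)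
    (hdiam : ∃ M : ℝ, ∀ I ∈ 𝓘, Metric.diam I ≤ M) :
    ∃ 𝓢 ⊆ 𝓘,
      (𝓢.Pairwise fun S T => Disjoint (closure S) (closure T)) ∧
      ∃ 𝓕 : Set ℝ → Set (Set ℝ),
        (∀ S ∈ 𝓢, 𝓕 S ⊆ 𝓘) ∧
        (𝓘 = ⋃ S ∈ 𝓢, 𝓕 S) ∧
        ∀ S ∈ 𝓢,
          (∃ a b : ℝ, a < b ∧ Ioo a b ⊆ S ∧ S ⊆ Icc a b ∧
            ⋃₀ 𝓕 S ⊆ Icc ((a + b) / 2 - 5 * (b - a) / 2) ((a + b) / 2 + 5 * (b - a) / 2)) ∧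
          μH[(0 : ℝ)] (mboundary1 (⋃₀ 𝓕 S)) ≤ μH[(0 : ℝ)] (frontier S) ∧
          μH[(0 : ℝ)] (frontier S) = 2 := by
  obtain ⟨M, hM⟩ := hdiam
  obtain ⟨u, hu𝓘, hdisj, hcov⟩ :=
    Vitali.exists_disjoint_subfamily_covering_enlargement
      (fun I : Set ℝ => closure I) 𝓘 (fun I => Metric.diam I) 2 one_lt_two
      (fun I _ => Metric.diam_nonneg) M hM
      (fun I hI => by
        obtain ⟨a, b, hab, h1, _⟩ := h𝓘 I hI
        exact (Set.Nonempty.mono h1 (nonempty_Ioo.mpr hab)).closure)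
  classical
  set 𝓕 : Set ℝ → Set (Set ℝ) := fun S =>
    {I | I ∈ 𝓘 ∧ (closure I ∩ closure S).Nonempty ∧ Metric.diam I ≤ 2 * Metric.diam S}
    with h𝓕
  refine ⟨u, hu𝓘, hdisj, 𝓕, fun S _ I hI => hI.1, ?_, ?_⟩
  · ext I
    constructor
    · intro hI
      obtain ⟨S, hS, hint, hd⟩ := hcov I hI
      exact mem_biUnion hS ⟨hI, hint, hd⟩
    · intro hI
      obtain ⟨S, -, hI𝓘, -, -⟩ := Set.mem_iUnion₂.mp hI
      exact hI𝓘
  intro S hS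
  obtain ⟨a, b, hab, hIoo, hIcc⟩ := h𝓘 S (hu𝓘 hS)
  set U : Set ℝ := ⋃₀ 𝓕 S with hU
  have hSmem : S ∈ 𝓕 S := by
    refine ⟨hu𝓘 hS, ?_, ?_⟩
    · refine ⟨(a + b) / 2, ?_, ?_⟩ <;>
        exact subset_closure (hIoo ⟨by linarith, by linarith⟩)
    · nlinarith [Metric.diam_nonneg (s := S)]
  have hSsubU : Ioo a b ⊆ U := fun x hx => ⟨S, hSmem, hIoo hx⟩
  have hclS : closure S ⊆ Icc a b := by
    simpa using closure_mono hIcc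
  have hdiamS : Metric.diam S ≤ b - a := by
    calc Metric.diam S ≤ Metric.diam (Icc a b) := Metric.diam_mono hIcc (isBounded_Icc a b)
    _ = b - a := Real.diam_Icc hab.le
  -- bound on U
  have hUbound : U ⊆ Icc (a - 2 * (b - a)) (b + 2 * (b - a)) := by
    rintro x ⟨I, ⟨hI𝓘, ⟨y, hyI, hyS⟩, hdI⟩, hxI⟩
    obtain ⟨aI, bI, habI, h1I, h2I⟩ := h𝓘 I hI𝓘
    have hbdd : Bornology.IsBounded I := Bornology.IsBounded.subset (isBounded_Icc aI bI) h2I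
    have hdist : dist x y ≤ Metric.diam I := by
      have := Metric.dist_le_diam_of_mem hbdd.closure (subset_closure hxI) hyI
      rwa [Metric.diam_closure] at this
    have hy : y ∈ Icc a b := hclS hyS
    have habs : |x - y| ≤ 2 * (b - a) := by
      rw [Real.dist_eq] at hdist
      linarith
    rw [abs_le] at habs
    exact ⟨by linarith [hy.1, hy.2], by linarith [hy.1, hy.2]⟩
  have hUne : U.Nonempty := ⟨(a + b) / 2, hSsubU ⟨by linarith, by linarith⟩⟩
  have hbddB : BddBelow U := ⟨a - 2 * (b - a), fun x hx => (hUbound hx).1⟩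
  have hbddA : BddAbove U := ⟨b + 2 * (b - a), fun x hx => (hUbound hx).2⟩
  set lo := sInf U with hlo
  set hi := sSup U with hhi
  -- Lemma A
  have hA : Ioo lo hi \ U ⊆ {a, b} := by
    rintro x ⟨⟨hxlo, hxhi⟩, hxU⟩
    by_contra hx
    simp only [mem_insert_iff, mem_singleton_iff, not_or] at hx
    rcases lt_trichotomy x a with hxa | hxa | hxa
    · -- there is u ∈ U with u < x
      obtain ⟨v, hvU, hvx⟩ : ∃ v ∈ U, v < x := by
        by_contra hc
        push_neg at hc
        exact absurd (le_csInf hUne hc) (not_le.mpr hxlo)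
      obtain ⟨I, hImem, hvI⟩ := hvU
      obtain ⟨hI𝓘, ⟨y, hyI, hyS⟩, -⟩ := id hImem
      obtain ⟨aI, bI, habI, h1I, h2I⟩ := h𝓘 I hI𝓘
      have hyIcc : y ∈ Icc aI bI := by
        have := closure_mono h2I hyI
        simpa using this
      have hya : a ≤ y := (hclS hyS).1
      have : x ∈ Ioo aI bI :=
        ⟨lt_of_le_of_lt (h2I hvI).1 hvx, lt_of_lt_of_le (hxa.trans_le hya) hyIcc.2⟩
      exact hxU ⟨I, hImem, h1I this⟩
    · exact hx.1 hxa
    · rcases lt_trichotomy x b with hxb | hxb | hxb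
      · exact hxU (hSsubU ⟨hxa, hxb⟩)
      · exact hx.2 hxb
      · obtain ⟨v, hvU, hvx⟩ : ∃ v ∈ U, x < v := by
          by_contra hc
          push_neg at hc
          exact absurd (csSup_le hUne hc) (not_le.mpr hxhi)
        obtain ⟨I, hImem, hvI⟩ := hvU
        obtain ⟨hI𝓘, ⟨y, hyI, hyS⟩, -⟩ := id hImem
        obtain ⟨aI, bI, habI, h1I, h2I⟩ := h𝓘 I hI𝓘
        have hyIcc : y ∈ Icc aI bI := by
          have := closure_mono h2I hyI
          simpa using this
        have hyb : y ≤ b := (hclS hyS).2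
        have : x ∈ Ioo aI bI :=
          ⟨lt_of_le_of_lt hyIcc.1 (hyb.trans_lt hxb), lt_of_lt_of_le hvx (h2I hvI).2⟩
        exact hxU ⟨I, hImem, h1I this⟩
  -- a.e. equality with Ioo lo hi
  have hae : U =ᵐ[volume] Ioo lo hi := by
    rw [MeasureTheory.ae_eq_set]
    constructor
    · refine measure_mono_null (?_ : U \ Ioo lo hi ⊆ {lo, hi}) ?_
      · rintro x ⟨hxU, hxn⟩
        have h1 : lo ≤ x := csInf_le hbddB hxU
        have h2 : x ≤ hi := le_csSup hbddA hxU
        rcases eq_or_lt_of_le h1 with h | h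
        · exact Or.inl h.symm
        rcases eq_or_lt_of_le h2 with h' | h'
        · exact Or.inr h'
        exact absurd ⟨h, h'⟩ hxn
      · exact ((Set.finite_singleton hi).insert lo).measure_zero volume
    · refine measure_mono_null hA ?_
      exact ((Set.finite_singleton b).insert a).measure_zero volume
  have haec : Uᶜ =ᵐ[volume] (Ioo lo hi)ᶜ := by
    rwa [MeasureTheory.ae_eq_set_compl_compl]
  have hbd : mboundary1 U = mboundary1 (Ioo lo hi) := by
    unfold mboundary1
    rw [mclosure1_congr hae]; exact congrArg _ (mclosure1_congr haec)
  -- boundary of Ioo lo hi is in {lo, hi}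
  have hbsub : mboundary1 (Ioo lo hi) ⊆ {lo, hi} := by
    rintro x ⟨h1, h2⟩
    by_contra hx
    simp only [mem_insert_iff, mem_singleton_iff, not_or] at hx
    rcases lt_trichotomy x lo with hxlo | hxlo | hxlo
    · refine not_mem_mclosure1_of_disjoint (sub_pos.mpr hxlo) (fun r hr hr' => ?_) h1
      rw [Set.eq_empty_iff_forall_notMem]
      rintro y ⟨⟨-, hy2⟩, hy3, -⟩
      linarith
    · exact hx.1 hxlo
    · rcases lt_trichotomy x hi with hxhi | hxhi | hxhi
      · refine not_mem_mclosure1_of_disjoint (lt_min (sub_pos.mpr hxlo) (sub_pos.mpr hxhi))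
          (fun r hr hr' => ?_) h2
        rw [lt_min_iff] at hr'
        rw [Set.eq_empty_iff_forall_notMem]
        rintro y ⟨⟨hy1, hy2⟩, hy3⟩
        exact hy3 ⟨by linarith [hr'.1], by linarith [hr'.2]⟩
      · exact hx.2 hxhi
      · refine not_mem_mclosure1_of_disjoint (sub_pos.mpr hxhi) (fun r hr hr' => ?_) h1
        rw [Set.eq_empty_iff_forall_notMem]
        rintro y ⟨⟨hy1, -⟩, -, hy4⟩
        linarith
  -- frontier S
  have hcloS : closure S = Icc a b := by
    refine subset_antisymm hclS ?_
    rw [← closure_Ioo hab.ne]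
    exact closure_mono hIoo
  have hintS : interior S = Ioo a b := by
    refine subset_antisymm ?_ (interior_maximal hIoo isOpen_Ioo)
    have := interior_mono hIcc
    rwa [interior_Icc] at this
  have hfr : frontier S = {a, b} := by
    rw [frontier, hcloS, hintS, Icc_diff_Ioo_same hab.le]
  have hfr2 : μH[(0:ℝ)] (frontier S) = 2 := by
    rw [hfr]; exact hd_pair hab.ne
  refine ⟨⟨a, b, hab, hIoo, hIcc, fun x hx => ?_⟩, ?_, hfr2⟩
  · have := hUbound hx
    exact ⟨by linarith [this.1], by linarith [this.2]⟩
  · rw [hfr2, hbd]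
    calc μH[(0:ℝ)] (mboundary1 (Ioo lo hi)) ≤ μH[(0:ℝ)] ({lo, hi} : Set ℝ) :=
          measure_mono hbsub
      _ ≤ 2 := hd_pair_le
end

section
/- Let d ≥ 2. For each C > 0 there exists a set 𝓑 of balls in ℝ^d with sup{diam(B) : B ∈ 𝓑} < ∞ such that there is NO subset 𝓢 ⊆ 𝓑 of pairwise disjoint balls admitting a family of sets {D_S : S ∈ 𝓢} with ∂*(⋃𝓑) = ⋃_{S∈𝓢} D_S, D_S ⊆ C·S for every S ∈ 𝓢, and ℋ^{d−1}(D_S) ≤ C · ℋ^{d−1}(∂S) for every S ∈ 𝓢. -/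
open MeasureTheory Metric Set Filter Topology ENNReal NNReal

/-- The measure-theoretic closure of a set `E ⊆ ℝ^d`:
points where `limsup_{r→0⁺} λ(B(x,r) ∩ E)/r^d > 0`. -/
noncomputable def mclosure (d : ℕ) (E : Set (EuclideanSpace ℝ (Fin d))) :
    Set (EuclideanSpace ℝ (Fin d)) :=
  {x | 0 < limsup (fun r : ℝ =>
      volume (ball x r ∩ E) / ENNReal.ofReal (r ^ d)) (𝓝[>] (0 : ℝ))}

/-- The measure-theoretic boundary `∂*E = cl*(E) ∩ cl*(ℝ^d ∖ E)`. -/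
noncomputable def mboundary (d : ℕ) (E : Set (EuclideanSpace ℝ (Fin d))) :
    Set (EuclideanSpace ℝ (Fin d)) :=
  mclosure d E ∩ mclosure d Eᶜ

/-- A ball in `ℝ^d`: an open or closed ball of positive radius. -/
def IsBall (d : ℕ) (B : Set (EuclideanSpace ℝ (Fin d))) : Prop :=
  ∃ (x : EuclideanSpace ℝ (Fin d)) (r : ℝ), 0 < r ∧
    (B = ball x r ∨ B = closedBall x r)

namespace ELF

/-! ### 1D Cantor combinatorics -/

noncomputable def q (n : ℕ) : ℝ := (4:ℝ)⁻¹ ^ n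

lemma q_pos (n : ℕ) : 0 < q n := by unfold q; positivity

lemma q_succ (n : ℕ) : q (n+1) = q n / 4 := by
  simp only [q, pow_succ]; ring

lemma q_anti {n m : ℕ} (h : n ≤ m) : q m ≤ q n := by
  apply pow_le_pow_of_le_one (by norm_num) (by norm_num) h

lemma q_le_one (n : ℕ) : q n ≤ 1 := by
  simpa [q] using q_anti (Nat.zero_le n)

noncomputable def dig (a : ℕ → Bool) (i : ℕ) : ℝ := if a i then 3 else 0

lemma dig_nonneg (a : ℕ → Bool) (i : ℕ) : 0 ≤ dig a i := by
  unfold dig; split <;> norm_num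

lemma dig_le (a : ℕ → Bool) (i : ℕ) : dig a i ≤ 3 := by
  unfold dig; split <;> norm_num

noncomputable def cw (a : ℕ → Bool) (n : ℕ) : ℝ :=
  ∑ i ∈ Finset.range n, dig a i * q (i+1)

lemma cw_succ (a : ℕ → Bool) (n : ℕ) : cw a (n+1) = cw a n + dig a n * q (n+1) := by
  simp [cw, Finset.sum_range_succ]

/-- nesting of the basic intervals, one step -/
lemma I_step (a : ℕ → Bool) (n : ℕ) :
    cw a n ≤ cw a (n+1) ∧ cw a (n+1) + q (n+1) ≤ cw a n + q n := by
  rw [cw_succ]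
  constructor
  · nlinarith [dig_nonneg a n, (q_pos (n+1)).le]
  · have h4 : q n = 4 * q (n+1) := by rw [q_succ]; ring
    nlinarith [dig_le a n, q_pos (n+1)]

lemma I_nested (a : ℕ → Bool) {n m : ℕ} (h : n ≤ m) :
    cw a n ≤ cw a m ∧ cw a m + q m ≤ cw a n + q n := by
  induction m with
  | zero => simp_all
  | succ m ih =>
    rcases Nat.lt_or_ge n (m+1) with hlt | hge
    · have hnm : n ≤ m := by omega
      obtain ⟨h1, h2⟩ := ih hnm
      obtain ⟨h3, h4⟩ := I_step a m
      exact ⟨h1.trans h3, h4.trans h2⟩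
    · have : n = m + 1 := by omega
      subst this; exact ⟨le_rfl, le_rfl⟩

lemma summable_geom_aux (c : ℝ) : Summable (fun i : ℕ => c * (4⁻¹:ℝ)^i) :=
  (summable_geometric_of_lt_one (by norm_num) (by norm_num)).mul_left c

lemma summable_dig (a : ℕ → Bool) : Summable (fun i => dig a i * q (i+1)) := by
  apply Summable.of_nonneg_of_le
    (fun i => mul_nonneg (dig_nonneg a i) (q_pos (i+1)).le)
    (fun i => ?_) (summable_geom_aux (3 * (4:ℝ)⁻¹))
  have h1 : dig a i * q (i+1) ≤ 3 * q (i+1) := by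
    nlinarith [dig_le a i, q_pos (i+1)]
  calc dig a i * q (i+1) ≤ 3 * q (i+1) := h1
    _ = 3 * (4:ℝ)⁻¹ * (4⁻¹)^i := by rw [q]; ring

noncomputable def pt (a : ℕ → Bool) : ℝ := ∑' i, dig a i * q (i+1)

lemma tail_sum (n : ℕ) : ∑' i : ℕ, 3 * q (n+1+i) = q n := by
  have h : ∀ i : ℕ, 3 * q (n+1+i) = (3 * q (n+1)) * (4⁻¹)^i := by
    intro i; rw [q, q, pow_add]; ring
  rw [tsum_congr h, _root_.tsum_mul_left, tsum_geometric_of_lt_one (by norm_num) (by norm_num),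
    q_succ]
  norm_num
  rw [q]
  ring

lemma summable_tail (a : ℕ → Bool) (n : ℕ) : Summable (fun i => dig a (i+n) * q (i+n+1)) := by
  apply Summable.of_nonneg_of_le
    (fun i => mul_nonneg (dig_nonneg a (i+n)) (q_pos _).le)
    (fun i => ?_) (summable_geom_aux (3 * q (n+1)))
  have h1 : dig a (i+n) * q (i+n+1) ≤ 3 * q (i+n+1) := by
    nlinarith [dig_le a (i+n), q_pos (i+n+1)]
  have h2 : q (i+n+1) = q (n+1) * (4⁻¹:ℝ)^i := by
    rw [q, q, ← pow_add]
    congr 1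
    omega
  rw [h2] at h1 ⊢
  linarith

lemma pt_mem_I (a : ℕ → Bool) (n : ℕ) : cw a n ≤ pt a ∧ pt a ≤ cw a n + q n := by
  have hs := summable_dig a
  have hsplit : cw a n + (∑' i, dig a (i+n) * q (i+n+1)) = pt a := by
    unfold cw pt
    exact hs.sum_add_tsum_nat_add n
  have htail0 : 0 ≤ ∑' i, dig a (i + n) * q (i + n + 1) :=
    tsum_nonneg (fun i => mul_nonneg (dig_nonneg a (i+n)) (q_pos _).le)
  have htail1 : ∑' i, dig a (i + n) * q (i + n + 1) ≤ q n := by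
    have hle : ∀ i : ℕ, dig a (i + n) * q (i + n + 1) ≤ 3 * q (n + 1 + i) := by
      intro i
      have he : n + 1 + i = i + n + 1 := by omega
      rw [he]
      nlinarith [dig_le a (i+n), q_pos (i+n+1)]
    have hsum : Summable (fun i : ℕ => 3 * q (n+1+i)) := by
      have h : ∀ i : ℕ, 3 * q (n+1+i) = (3 * q (n+1)) * (4⁻¹)^i := by
        intro i; rw [q, q, pow_add]; ring
      rw [funext h]
      exact summable_geom_aux _
    calc ∑' i, dig a (i + n) * q (i + n + 1) ≤ ∑' i : ℕ, 3 * q (n+1+i) :=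
          Summable.tsum_le_tsum hle (summable_tail a n) hsum
      _ = q n := tail_sum n
  constructor
  · linarith
  · linarith


/-- geometric sum over an interval, exact value -/
lemma sum_Ico_q {i n : ℕ} (h : i ≤ n) :
    ∑ j ∈ Finset.Ico i n, 3 * q (j+1) = q i - q n := by
  induction n with
  | zero =>
    have : i = 0 := by omega
    subst this; simp
  | succ n ih =>
    rcases Nat.lt_or_ge i (n+1) with hlt | hge
    · have hin : i ≤ n := by omega
      rw [Finset.sum_Ico_succ_top hin, ih hin, q_succ]
      ring
    · have : i = n + 1 := by omega
      subst this; simp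

/-- separation of distinct same-level intervals -/
lemma cw_sep {a b : ℕ → Bool} {n : ℕ} (hne : ∃ i, i < n ∧ a i ≠ b i) :
    2 * q n ≤ |cw a n - cw b n| := by
  classical
  let i := Nat.find hne
  obtain ⟨hi_lt, hi_ne⟩ : i < n ∧ a i ≠ b i := Nat.find_spec hne
  have hmin : ∀ j, j < i → a j = b j := by
    intro j hj
    by_contra hc
    exact (Nat.find_min hne hj) ⟨lt_trans hj hi_lt, hc⟩
  have hsplit : cw a n - cw b n
      = (dig a i - dig b i) * q (i+1)
        + ∑ j ∈ Finset.Ico (i+1) n, (dig a j - dig b j) * q (j+1) := by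
    unfold cw
    rw [← Finset.sum_sub_distrib, Finset.range_eq_Ico,
      ← Finset.sum_Ico_consecutive _ (Nat.zero_le i) (le_of_lt hi_lt),
      ← Finset.sum_Ico_consecutive _ (by omega : i ≤ i+1) (by omega : i+1 ≤ n)]
    have h0 : ∑ j ∈ Finset.Ico 0 i, (dig a j * q (j+1) - dig b j * q (j+1)) = 0 := by
      apply Finset.sum_eq_zero
      intro j hj
      simp only [Finset.mem_Ico] at hj
      rw [dig, dig, hmin j hj.2]
      ring
    have h1 : ∑ j ∈ Finset.Ico i (i+1), (dig a j * q (j+1) - dig b j * q (j+1))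
        = (dig a i - dig b i) * q (i+1) := by
      rw [Finset.sum_Ico_eq_sum_range]
      simp only [add_tsub_cancel_left, Finset.sum_range_one]
      ring
    rw [h0, h1]
    have h2 : ∑ j ∈ Finset.Ico (i+1) n, (dig a j * q (j+1) - dig b j * q (j+1))
        = ∑ j ∈ Finset.Ico (i+1) n, (dig a j - dig b j) * q (j+1) := by
      apply Finset.sum_congr rfl
      intro j _
      ring
    rw [h2]
    ring
  have hdig : |dig a i - dig b i| = 3 := by
    rw [dig, dig]
    rcases Bool.eq_false_or_eq_true (a i) with h1 | h1 <;>
      rcases Bool.eq_false_or_eq_true (b i) with h2 | h2 <;>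
      simp [h1, h2] at hi_ne ⊢ <;> norm_num
  have hR : |∑ j ∈ Finset.Ico (i+1) n, (dig a j - dig b j) * q (j+1)|
      ≤ q (i+1) - q n := by
    calc |∑ j ∈ Finset.Ico (i+1) n, (dig a j - dig b j) * q (j+1)|
        ≤ ∑ j ∈ Finset.Ico (i+1) n, |(dig a j - dig b j) * q (j+1)| :=
          Finset.abs_sum_le_sum_abs _ _
      _ ≤ ∑ j ∈ Finset.Ico (i+1) n, 3 * q (j+1) := by
          apply Finset.sum_le_sum
          intro j _
          rw [abs_mul, abs_of_pos (q_pos (j+1))]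
          have hd3 : |dig a j - dig b j| ≤ 3 := by
            rw [dig, dig]
            rcases Bool.eq_false_or_eq_true (a j) with h1 | h1 <;>
              rcases Bool.eq_false_or_eq_true (b j) with h2 | h2 <;>
              simp [h1, h2] <;> norm_num
          nlinarith [q_pos (j+1)]
      _ = q (i+1) - q n := sum_Ico_q (by omega)
  have habs1 : |(dig a i - dig b i) * q (i+1)| = 3 * q (i+1) := by
    rw [abs_mul, hdig, abs_of_pos (q_pos (i+1))]
  have hq1 : q n ≤ q (i+1) := q_anti (by omega)
  rw [hsplit]
  have htri := abs_add_le ((dig a i - dig b i) * q (i+1)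
      + ∑ j ∈ Finset.Ico (i+1) n, (dig a j - dig b j) * q (j+1))
      (-(∑ j ∈ Finset.Ico (i+1) n, (dig a j - dig b j) * q (j+1)))
  simp only [add_neg_cancel_right] at htri
  rw [habs1] at htri
  rw [abs_neg] at htri
  nlinarith [hR, htri, q_pos n]

/-- the "core" subinterval of the middle gap at level n -/
def mem_core (x : ℝ) (a : ℕ → Bool) (n : ℕ) : Prop :=
  cw a n + (3/2) * q (n+1) ≤ x ∧ x ≤ cw a n + (5/2) * q (n+1)

lemma core_sub_I {x : ℝ} {a : ℕ → Bool} {n : ℕ} (h : mem_core x a n) :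
    cw a n ≤ x ∧ x ≤ cw a n + q n := by
  obtain ⟨h1, h2⟩ := h
  have h4 : q n = 4 * q (n+1) := by rw [q_succ]; ring
  constructor
  · nlinarith [q_pos (n+1)]
  · nlinarith [q_pos (n+1)]

/-- cores at different levels never meet -/
lemma core_core_disj {x : ℝ} {a b : ℕ → Bool} {n m : ℕ} (hnm : n < m)
    (hxb : mem_core x b n) (hxa : mem_core x a m) : False := by
  have hIb := core_sub_I hxb
  have hIa' := core_sub_I hxa
  have hIam := I_nested a (le_of_lt hnm)
  have hIa : cw a n ≤ x ∧ x ≤ cw a n + q n := ⟨hIam.1.trans hIa'.1,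
    by linarith [hIa'.2, hIam.2]⟩
  -- prefixes must agree up to n
  have hagree : ∀ i, i < n → a i = b i := by
    by_contra hc
    push_neg at hc
    obtain ⟨i, hi, hne⟩ := hc
    have := cw_sep (a := a) (b := b) ⟨i, hi, hne⟩
    have habs : |cw a n - cw b n| ≤ q n := by
      rw [abs_le]
      constructor <;> [linarith [hIa.1, hIa.2, hIb.1, hIb.2];
        linarith [hIa.1, hIa.2, hIb.1, hIb.2]]
    nlinarith [q_pos n]
  have hcw_eq : cw a n = cw b n := by
    unfold cw
    apply Finset.sum_congr rfl
    intro j hj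
    simp only [Finset.mem_range] at hj
    rw [dig, dig, hagree j hj]
  -- x lies in the open middle gap of I a n
  have hgap1 : cw a n + q (n+1) < x := by
    obtain ⟨h1, _⟩ := hxb
    rw [← hcw_eq] at h1
    nlinarith [q_pos (n+1)]
  have hgap2 : x < cw a n + 3 * q (n+1) := by
    obtain ⟨_, h2⟩ := hxb
    rw [← hcw_eq] at h2
    nlinarith [q_pos (n+1)]
  -- but x also lies in I a (n+1)
  have hI1 := I_nested a (by omega : n + 1 ≤ m)
  have hx1 : cw a (n+1) ≤ x := hI1.1.trans hIa'.1
  have hx2 : x ≤ cw a (n+1) + q (n+1) := by linarith [hIa'.2, hI1.2]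
  rw [cw_succ] at hx1 hx2
  rcases Bool.eq_false_or_eq_true (a n) with hb | hb <;> rw [dig, hb] at hx1 hx2
  · simp at hx1 hx2
    linarith
  · simp at hx1 hx2
    linarith

/-- the 1D union of all even-level cores -/
def G1 : Set ℝ := {x | ∃ a k, mem_core x a (2*k)}

lemma lemA {a : ℕ → Bool} {k : ℕ} {x : ℝ} (h : mem_core x a (2*k)) :
    x ∈ G1 ∧ |x - pt a| ≤ q (2*k) := by
  refine ⟨⟨a, k, h⟩, ?_⟩
  have h1 := core_sub_I h
  have h2 := pt_mem_I a (2*k)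
  rw [abs_le]
  constructor <;> linarith [h1.1, h1.2, h2.1, h2.2]

lemma lemB {a : ℕ → Bool} {k : ℕ} {x : ℝ} (h : mem_core x a (2*k+1)) :
    x ∉ G1 ∧ |x - pt a| ≤ q (2*k+1) := by
  constructor
  · rintro ⟨b, j, hj⟩
    rcases Nat.lt_or_ge (2*j) (2*k+1) with hlt | hge
    · exact core_core_disj hlt hj h
    · have : 2*k+1 < 2*j := by omega
      exact core_core_disj this h hj
  · have h1 := core_sub_I h
    have h2 := pt_mem_I a (2*k+1)
    rw [abs_le]
    constructor <;> linarith [h1.1, h1.2, h2.1, h2.2]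


/-! ### Geometry in ℝ^(m+2) -/

variable {m : ℕ}

abbrev E (m : ℕ) := EuclideanSpace ℝ (Fin (m+2))

lemma coord_sq_le_dist_sq (z w : E m) (i : Fin (m+2)) :
    |z i - w i| ≤ dist z w := by
  rw [EuclideanSpace.dist_eq]
  have h1 : |z i - w i| = Real.sqrt ((z i - w i)^2) := by
    rw [Real.sqrt_sq_eq_abs]
  rw [h1]
  apply Real.sqrt_le_sqrt
  have : ∀ j, (0:ℝ) ≤ (z j - w j)^2 := fun j => sq_nonneg _
  have hmem : i ∈ Finset.univ := Finset.mem_univ i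
  calc (z i - w i)^2 ≤ ∑ j, (z j - w j)^2 :=
    Finset.single_le_sum (fun j _ => this j) hmem
    _ = ∑ j, dist (z j) (w j)^2 := by
      apply Finset.sum_congr rfl
      intro j _
      rw [Real.dist_eq, sq_abs]

lemma dist_le_of_coords (z w : E m) (ρ : ℝ) (hρ : 0 ≤ ρ)
    (h : ∀ i, |z i - w i| ≤ ρ) : dist z w ≤ Real.sqrt (m+2) * ρ := by
  rw [EuclideanSpace.dist_eq]
  have hb : ∑ j, dist (z j) (w j)^2 ≤ (m+2) * ρ^2 := by
    calc ∑ j, dist (z j) (w j)^2 ≤ ∑ _j : Fin (m+2), ρ^2 := by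
          apply Finset.sum_le_sum
          intro j _
          rw [Real.dist_eq]
          have := h j
          nlinarith [abs_nonneg (z j - w j)]
      _ = (m+2) * ρ^2 := by
          rw [Finset.sum_const, Finset.card_univ, Fintype.card_fin]
          push_cast
          ring
  calc Real.sqrt (∑ j, dist (z j) (w j)^2) ≤ Real.sqrt ((m+2) * ρ^2) :=
        Real.sqrt_le_sqrt hb
    _ = Real.sqrt (m+2) * ρ := by
        rw [Real.sqrt_mul (by positivity), Real.sqrt_sq hρ]

/-- the point with first coordinate `p` and the others those of `z` -/
noncomputable def mkpt (p : ℝ) (z : E m) : E m := WithLp.toLp 2 (Function.update z 0 p)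

lemma mkpt_zero (p : ℝ) (z : E m) : mkpt p z 0 = p := by
  simp [mkpt]

lemma mkpt_ne (p : ℝ) (z : E m) (i : Fin (m+2)) (hi : i ≠ 0) : mkpt p z i = z i := by
  simp [mkpt, Function.update_of_ne hi]

lemma dist_mkpt (p : ℝ) (z : E m) : dist z (mkpt p z) = |z 0 - p| := by
  rw [EuclideanSpace.dist_eq]
  have hsum : ∑ j, dist (z j) (mkpt p z j)^2 = (z 0 - p)^2 := by
    rw [Finset.sum_eq_single 0]
    · rw [mkpt_zero, Real.dist_eq, sq_abs]
    · intro j _ hj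
      rw [mkpt_ne p z j hj]
      simp
    · intro h; exact absurd (Finset.mem_univ _) h
  rw [hsum, Real.sqrt_sq_eq_abs]

/-- the family of balls -/
def Balls (m : ℕ) : Set (Set (E m)) :=
  {S | ∃ (a : ℕ → Bool) (k : ℕ) (z : E m),
    S = closedBall (mkpt (cw a (2*k) + 2 * q (2*k+1)) z) (q (2*k+1) / 2)}

lemma U_eq : ⋃₀ Balls m = {z : E m | z 0 ∈ G1} := by
  ext z
  constructor
  · rintro ⟨S, ⟨a, k, w, rfl⟩, hz⟩
    have h1 : |z 0 - (cw a (2*k) + 2 * q (2*k+1))| ≤ q (2*k+1)/2 := by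
      calc |z 0 - (cw a (2*k) + 2 * q (2*k+1))|
          = |z 0 - mkpt (cw a (2*k) + 2 * q (2*k+1)) w 0| := by rw [mkpt_zero]
        _ ≤ dist z (mkpt (cw a (2*k) + 2 * q (2*k+1)) w) := coord_sq_le_dist_sq _ _ 0
        _ ≤ q (2*k+1)/2 := by exact mem_closedBall.mp hz
    rw [abs_le] at h1
    refine ⟨a, k, ?_, ?_⟩ <;> [linarith [h1.1]; linarith [h1.2]]
  · rintro ⟨a, k, h1, h2⟩
    refine ⟨closedBall (mkpt (cw a (2*k) + 2 * q (2*k+1)) z) (q (2*k+1) / 2),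
      ⟨a, k, z, rfl⟩, ?_⟩
    rw [mem_closedBall, dist_mkpt, abs_le]
    constructor <;> [linarith; linarith]


/-! ### Volume of slabs -/

lemma volume_slab (A : Set ℝ) (hA : MeasurableSet A) (z : E m) (h : ℝ) :
    volume {w : E m | w 0 ∈ A ∧ ∀ i : Fin (m+2), i ≠ 0 → w i ∈ Ioo (z i - h) (z i + h)}
      = volume A * (ENNReal.ofReal (2*h))^(m+1) := by
  classical
  set P : Set (Fin (m+2) → ℝ) :=
    Set.pi Set.univ (fun i => if i = 0 then A else Ioo (z i - h) (z i + h)) with hP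
  have hPmeas : MeasurableSet P := by
    apply MeasurableSet.univ_pi
    intro i
    by_cases hi : i = 0 <;> simp [hi, hA, measurableSet_Ioo]
  have hset : {w : E m | w 0 ∈ A ∧ ∀ i : Fin (m+2), i ≠ 0 → w i ∈ Ioo (z i - h) (z i + h)}
      = (MeasurableEquiv.toLp 2 (Fin (m+2) → ℝ)).symm ⁻¹' P := by
    ext w
    simp only [Set.mem_setOf_eq, Set.mem_preimage, hP, Set.mem_pi, Set.mem_univ, true_implies]
    constructor
    · rintro ⟨h1, h2⟩ i
      by_cases hi : i = 0
      · subst hi; simpa using h1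
      · simpa [hi] using h2 i hi
    · intro hh
      constructor
      · have := hh 0; simpa using this
      · intro i hi
        have := hh i; simpa [hi] using this
  rw [hset,
    (EuclideanSpace.volume_preserving_symm_measurableEquiv_toLp (Fin (m+2))).measure_preimage
      hPmeas.nullMeasurableSet]
  rw [hP, volume_pi_pi]
  rw [Fin.prod_univ_succ]
  simp only [if_pos rfl]
  congr 1
  have : ∀ j : Fin (m+1), (if (j.succ : Fin (m+2)) = 0 then A else
      Ioo (z j.succ - h) (z j.succ + h)) = Ioo (z j.succ - h) (z j.succ + h) := by
    intro j
    simp [Fin.succ_ne_zero j]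
  calc ∏ j : Fin (m+1), volume (if (j.succ : Fin (m+2)) = 0 then A else
      Ioo (z j.succ - h) (z j.succ + h))
      = ∏ _j : Fin (m+1), ENNReal.ofReal (2*h) := by
        apply Finset.prod_congr rfl
        intro j _
        rw [this j, Real.volume_Ioo]
        congr 1
        ring
    _ = (ENNReal.ofReal (2*h))^(m+1) := by
        rw [Finset.prod_const, Finset.card_univ, Fintype.card_fin]


/-! ### Density bounds -/

noncomputable def RR (m : ℕ) (ρ : ℝ) : ℝ := 2 * Real.sqrt (m+2) * ρ

noncomputable def kap (m : ℕ) : ℝ := ((8:ℝ) * (Real.sqrt (m+2))^(m+2))⁻¹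

lemma sqrtD_pos (m : ℕ) : 0 < Real.sqrt (m+2) := by positivity

lemma kap_pos (m : ℕ) : 0 < kap m := by
  unfold kap
  have := sqrtD_pos m
  positivity

lemma RR_pos (m : ℕ) {ρ : ℝ} (hρ : 0 < ρ) : 0 < RR m ρ := by
  unfold RR
  have := sqrtD_pos m
  positivity

lemma kap_identity (m : ℕ) (ρ : ℝ) :
    kap m * (RR m ρ)^(m+2) = (ρ/4) * (2*ρ)^(m+1) := by
  unfold kap RR
  have hD : (0:ℝ) < Real.sqrt (m+2) := sqrtD_pos m
  have h1 : (2 * Real.sqrt (m+2) * ρ)^(m+2)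
      = 2^(m+2) * (Real.sqrt (m+2))^(m+2) * ρ^(m+2) := by
    rw [mul_pow, mul_pow]
  rw [h1]
  have h2 : (2*ρ)^(m+1) = 2^(m+1) * ρ^(m+1) := by rw [mul_pow]
  rw [h2]
  have h3 : ρ^(m+2) = ρ^(m+1) * ρ := by rw [pow_succ]
  rw [h3]
  have hne : (Real.sqrt (m+2))^(m+2) ≠ 0 := by positivity
  field_simp
  ring

lemma density_bound (z : E m) (p ρ : ℝ) (hρ : 0 < ρ) (W : Set (E m))
    (hsub : ∀ w : E m, p ≤ w 0 → w 0 ≤ p + ρ/4 → w ∈ W)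
    (hloc1 : z 0 - ρ ≤ p) (hloc2 : p + ρ/4 ≤ z 0 + ρ) :
    ENNReal.ofReal (kap m)
      ≤ volume (ball z (RR m ρ) ∩ W) / ENNReal.ofReal ((RR m ρ)^(m+2)) := by
  set Slab : Set (E m) :=
    {w : E m | w 0 ∈ Icc p (p + ρ/4) ∧
      ∀ i : Fin (m+2), i ≠ 0 → w i ∈ Ioo (z i - ρ) (z i + ρ)} with hSlab
  have hSlabW : Slab ⊆ W := by
    rintro w ⟨⟨h1, h2⟩, _⟩
    exact hsub w h1 h2
  have hSlabBall : Slab ⊆ ball z (RR m ρ) := by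
    rintro w ⟨⟨h1, h2⟩, h3⟩
    rw [mem_ball]
    have hco : ∀ i, |w i - z i| ≤ ρ := by
      intro i
      by_cases hi : i = 0
      · subst hi
        rw [abs_le]
        constructor <;> [linarith; linarith]
      · obtain ⟨ha, hb⟩ := h3 i hi
        rw [abs_le]
        constructor <;> [linarith; linarith]
    have := dist_le_of_coords w z ρ hρ.le hco
    have hlt : Real.sqrt (m+2) * ρ < RR m ρ := by
      unfold RR
      nlinarith [sqrtD_pos m]
    calc dist w z ≤ Real.sqrt (m+2) * ρ := this
      _ < RR m ρ := hlt
  have hvol : volume Slab = ENNReal.ofReal (ρ/4) * (ENNReal.ofReal (2*ρ))^(m+1) := by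
    have := volume_slab (Icc p (p + ρ/4)) measurableSet_Icc z ρ
    rw [hSlab, this, Real.volume_Icc]
    congr 2
    ring
  have hRp := RR_pos m hρ
  rw [ENNReal.le_div_iff_mul_le
    (Or.inl (ENNReal.ofReal_pos.2 (by positivity)).ne')
    (Or.inl ENNReal.ofReal_ne_top)]
  have hκ : (0:ℝ) ≤ kap m := (kap_pos m).le
  have hRpow : (0:ℝ) ≤ (RR m ρ)^(m+2) := by positivity
  calc ENNReal.ofReal (kap m) * ENNReal.ofReal ((RR m ρ)^(m+2))
      = ENNReal.ofReal (kap m * (RR m ρ)^(m+2)) := (ENNReal.ofReal_mul hκ).symm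
    _ = ENNReal.ofReal ((ρ/4) * (2*ρ)^(m+1)) := by rw [kap_identity]
    _ = ENNReal.ofReal (ρ/4) * ENNReal.ofReal ((2*ρ)^(m+1)) := by
        rw [ENNReal.ofReal_mul (by positivity)]
    _ = ENNReal.ofReal (ρ/4) * (ENNReal.ofReal (2*ρ))^(m+1) := by
        rw [ENNReal.ofReal_pow (by positivity)]
    _ = volume Slab := hvol.symm
    _ ≤ volume (ball z (RR m ρ) ∩ W) :=
        measure_mono (Set.subset_inter hSlabBall hSlabW)

lemma mem_mclosure_of (z : E m) (W : Set (E m)) (ρ : ℕ → ℝ) (hpos : ∀ k, 0 < ρ k)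
    (hlim : Tendsto ρ atTop (𝓝 0))
    (hb : ∀ k, ENNReal.ofReal (kap m)
      ≤ volume (ball z (RR m (ρ k)) ∩ W) / ENNReal.ofReal ((RR m (ρ k))^(m+2))) :
    z ∈ mclosure (m+2) W := by
  have htend : Tendsto (fun k => RR m (ρ k)) atTop (𝓝[>] (0:ℝ)) := by
    rw [tendsto_nhdsWithin_iff]
    constructor
    · have : Tendsto (fun k => 2 * Real.sqrt (m+2) * ρ k) atTop
          (𝓝 (2 * Real.sqrt (m+2) * 0)) := hlim.const_mul _
      simpa [RR] using this
    · exact Filter.Eventually.of_forall (fun k => mem_Ioi.2 (RR_pos m (hpos k)))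
  have hfreq : ∃ᶠ r in 𝓝[>] (0:ℝ), ENNReal.ofReal (kap m)
      ≤ volume (ball z r ∩ W) / ENNReal.ofReal (r^(m+2)) :=
    htend.frequently (Filter.Frequently.of_forall hb)
  have hle := Filter.le_limsup_of_frequently_le' hfreq
  show 0 < limsup (fun r : ℝ =>
      volume (ball z r ∩ W) / ENNReal.ofReal (r ^ (m+2))) (𝓝[>] (0 : ℝ))
  calc (0:ℝ≥0∞) < ENNReal.ofReal (kap m) := ENNReal.ofReal_pos.2 (kap_pos m)
    _ ≤ _ := hle

lemma tendsto_q_even : Tendsto (fun k => q (2*k)) atTop (𝓝 (0:ℝ)) := by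
  have h : ∀ k : ℕ, q (2*k) = ((4⁻¹:ℝ)^2)^k := by
    intro k; rw [q, ← pow_mul, mul_comm]
  rw [funext h]
  exact tendsto_pow_atTop_nhds_zero_of_lt_one (by norm_num) (by norm_num)

lemma tendsto_q_odd : Tendsto (fun k => q (2*k+1)) atTop (𝓝 (0:ℝ)) := by
  have h : ∀ k : ℕ, q (2*k+1) = q (2*k) / 4 := fun k => q_succ (2*k)
  rw [funext h]
  have := tendsto_q_even.div_const (4:ℝ)
  simpa using this

/-- Every point above a Cantor point is in the measure-theoretic boundary. -/
lemma pt_mem_mboundary (a : ℕ → Bool) (z : E m) (hz : z 0 = pt a) :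
    z ∈ mboundary (m+2) (⋃₀ Balls m) := by
  constructor
  · -- in mclosure of U
    apply mem_mclosure_of z _ (fun k => q (2*k)) (fun k => q_pos _) tendsto_q_even
    intro k
    apply density_bound z (cw a (2*k) + (3/2) * q (2*k+1)) (q (2*k)) (q_pos _)
    · intro w h1 h2
      have hq4 : q (2*k) / 4 = q (2*k+1) := (q_succ (2*k)).symm
      have hcore : mem_core (w 0) a (2*k) := by
        constructor
        · exact h1
        · rw [hq4] at h2; linarith
      rw [U_eq]
      exact (lemA hcore).1
    · have h := pt_mem_I a (2*k)
      rw [hz]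
      nlinarith [q_pos (2*k+1), h.2]
    · have h := pt_mem_I a (2*k)
      have hq4 : q (2*k+1) = q (2*k) / 4 := q_succ (2*k)
      rw [hz]
      nlinarith [q_pos (2*k), h.1]
  · -- in mclosure of complement
    apply mem_mclosure_of z _ (fun k => q (2*k+1)) (fun k => q_pos _) tendsto_q_odd
    intro k
    apply density_bound z (cw a (2*k+1) + (3/2) * q (2*k+2)) (q (2*k+1)) (q_pos _)
    · intro w h1 h2
      have hq4 : q (2*k+1) / 4 = q (2*k+2) := (q_succ (2*k+1)).symm
      have hcore : mem_core (w 0) a (2*k+1) := by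
        constructor
        · exact h1
        · rw [hq4] at h2; linarith
      simp only [Set.mem_compl_iff]
      rw [U_eq]
      exact (lemB hcore).1
    · have h := pt_mem_I a (2*k+1)
      rw [hz]
      nlinarith [q_pos (2*k+2), h.2]
    · have h := pt_mem_I a (2*k+1)
      have hq4 : q (2*k+2) = q (2*k+1) / 4 := q_succ (2*k+1)
      rw [hz]
      nlinarith [q_pos (2*k+1), h.1]


/-! ### The balls are balls, with bounded diameter -/

lemma balls_isBall : ∀ B ∈ Balls m, IsBall (m+2) B := by
  rintro B ⟨a, k, z, rfl⟩
  exact ⟨_, _, by have := q_pos (2*k+1); positivity, Or.inr rfl⟩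

lemma balls_diam : ∀ B ∈ Balls m, Metric.diam B ≤ 1 := by
  rintro B ⟨a, k, z, rfl⟩
  calc Metric.diam (closedBall (mkpt (cw a (2*k) + 2 * q (2*k+1)) z) (q (2*k+1) / 2))
      ≤ 2 * (q (2*k+1) / 2) := Metric.diam_closedBall (by have := q_pos (2*k+1); positivity)
    _ = q (2*k+1) := by ring
    _ ≤ 1 := q_le_one _

/-! ### Plates -/

noncomputable def plate (m : ℕ) (t : ℝ) : Set (E m) :=
  {z : E m | z 0 = t ∧ ∀ j : Fin (m+1), z j.succ ∈ Icc (0:ℝ) 1}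

lemma plate_closed (t : ℝ) : IsClosed (plate m t) := by
  have hcont : ∀ i : Fin (m+2), Continuous (fun z : E m => z i) := by
    intro i
    exact (continuous_apply i).comp (PiLp.continuous_ofLp 2 (fun _ : Fin (m+2) => ℝ))
  have h1 : plate m t = (fun z : E m => z 0) ⁻¹' {t} ∩
      ⋂ j : Fin (m+1), (fun z : E m => z j.succ) ⁻¹' Icc (0:ℝ) 1 := by
    ext z
    simp [plate, Set.mem_iInter, forall_and]
  rw [h1]
  apply IsClosed.inter
  · exact IsClosed.preimage (hcont 0) isClosed_singleton
  · exact isClosed_iInter (fun j => IsClosed.preimage (hcont j.succ) isClosed_Icc)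

lemma plate_measurable (t : ℝ) : MeasurableSet (plate m t) :=
  (plate_closed t).measurableSet

lemma plate_disj {t t' : ℝ} (h : t ≠ t') : Disjoint (plate m t) (plate m t') := by
  rw [Set.disjoint_left]
  rintro z ⟨h1, _⟩ ⟨h2, _⟩
  exact h (h1 ▸ h2 ▸ rfl)

lemma exp_cast (m : ℕ) : ((m+2 : ℕ) : ℝ) - 1 = ((m+1 : ℕ) : ℝ) := by
  push_cast; ring

/-- the plates have μH^{d-1} measure at least 1 -/
lemma plate_measure (t : ℝ) :
    1 ≤ μH[((m+2 : ℕ) : ℝ) - 1] (plate m t) := by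
  rw [exp_cast]
  -- project away the first coordinate
  set drop : E m → (Fin (m+1) → ℝ) := fun z j => z j.succ with hdrop
  have hlip : LipschitzWith 1 drop := by
    apply LipschitzWith.of_dist_le_mul
    intro z w
    simp only [NNReal.coe_one, one_mul]
    rw [dist_pi_le_iff dist_nonneg]
    intro j
    rw [Real.dist_eq]
    exact coord_sq_le_dist_sq z w j.succ
  have hbox : (Set.pi Set.univ (fun _ : Fin (m+1) => Icc (0:ℝ) 1)) ⊆ drop '' plate m t := by
    intro u hu
    refine ⟨WithLp.toLp 2 (Fin.cons t u), ⟨?_, ?_⟩, ?_⟩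
    · simp [Fin.cons_zero]
    · intro j
      have := hu j (Set.mem_univ j)
      simpa [Fin.cons_succ] using this
    · funext j
      simp [hdrop, Fin.cons_succ]
  have himg := hlip.hausdorffMeasure_image_le
    (by positivity : (0:ℝ) ≤ ((m+1 : ℕ) : ℝ)) (plate m t)
  have hboxvol : μH[((m+1 : ℕ) : ℝ)] (Set.pi Set.univ (fun _ : Fin (m+1) => Icc (0:ℝ) 1))
      = 1 := by
    have hcard : (Fintype.card (Fin (m+1)) : ℝ) = ((m+1 : ℕ) : ℝ) := by
      rw [Fintype.card_fin]
    rw [← hcard, hausdorffMeasure_pi_real]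
    rw [volume_pi_pi]
    simp [Real.volume_Icc]
  calc (1:ℝ≥0∞) = μH[((m+1 : ℕ) : ℝ)]
        (Set.pi Set.univ (fun _ : Fin (m+1) => Icc (0:ℝ) 1)) := hboxvol.symm
    _ ≤ μH[((m+1 : ℕ) : ℝ)] (drop '' plate m t) := measure_mono hbox
    _ ≤ 1 ^ ((m+1 : ℕ) : ℝ) * μH[((m+1 : ℕ) : ℝ)] (plate m t) := himg
    _ = μH[((m+1 : ℕ) : ℝ)] (plate m t) := by simp


/-! ### Uncountability -/

lemma not_countable_bool_seq : ¬ Countable (ℕ → Bool) := by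
  classical
  intro h
  have hg : Function.Injective (fun s : Set ℕ => (fun n => if n ∈ s then true else false : ℕ → Bool)) := by
    intro s t hst
    ext n
    have := congrFun hst n
    by_cases hs : n ∈ s <;> by_cases ht : n ∈ t <;> simp [hs, ht] at this ⊢
  have : Countable (Set ℕ) := hg.countable
  obtain ⟨f, hf⟩ := Countable.exists_injective_nat (Set ℕ)
  exact Function.cantor_injective f hf

lemma pt_injective : Function.Injective pt := by
  intro a b hab
  by_contra hne
  have hex : ∃ i, a i ≠ b i := by
    by_contra hc
    push_neg at hc
    exact hne (funext hc)
  obtain ⟨i, hi⟩ := hex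
  have hsep := cw_sep (a := a) (b := b) (n := i+1) ⟨i, by omega, hi⟩
  have h1 := pt_mem_I a (i+1)
  have h2 := pt_mem_I b (i+1)
  rw [hab] at h1
  have habs : |cw a (i+1) - cw b (i+1)| ≤ q (i+1) := by
    rw [abs_le]
    constructor <;> linarith [h1.1, h1.2, h2.1, h2.2]
  nlinarith [q_pos (i+1)]

/-! ### Finiteness of the Hausdorff measure of spheres -/

lemma coord_abs_le_norm (w : E m) (i : Fin (m+2)) : |w i| ≤ ‖w‖ := by
  have := coord_sq_le_dist_sq w 0 i
  simpa [dist_zero_right] using this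

def face (m : ℕ) (i : Fin (m+2)) (s : Bool) : Set (E m) :=
  {w : E m | w i = (if s then (1:ℝ) else -1) ∧ ∀ j, |w j| ≤ 1}

lemma norm_ge_one_of_face {i : Fin (m+2)} {s : Bool} {w : E m} (h : w ∈ face m i s) :
    1 ≤ ‖w‖ := by
  obtain ⟨h1, _⟩ := h
  have := coord_abs_le_norm w i
  rw [h1] at this
  rcases s with _ | _ <;> simp at this <;> linarith

noncomputable def sphMap (x : E m) (r : ℝ) : E m → E m :=
  fun w => x + (r * ‖w‖⁻¹) • w

lemma sphere_sub_image (x : E m) (r : ℝ) (hr : 0 < r) :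
    sphere x r ⊆ sphMap x r '' (⋃ (p : Fin (m+2) × Bool), face m p.1 p.2) := by
  intro v hv
  set u : E m := v - x with hu
  have hnu : ‖u‖ = r := by
    rw [hu, ← dist_eq_norm]
    exact mem_sphere.mp hv
  obtain ⟨i, -, hi⟩ := Finset.exists_max_image Finset.univ (fun j => |u j|)
    ⟨0, Finset.mem_univ 0⟩
  set c := |u i| with hc
  have hcpos : 0 < c := by
    by_contra hcn
    push_neg at hcn
    have hc0 : c = 0 := le_antisymm hcn (abs_nonneg _)
    have hall : ∀ j, |u j - (0 : E m) j| ≤ 0 := by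
      intro j
      have h1 := hi j (Finset.mem_univ j)
      simp only [PiLp.zero_apply, sub_zero]
      rw [← hc0]
      exact h1
    have := dist_le_of_coords u 0 0 le_rfl hall
    rw [dist_zero_right, hnu] at this
    nlinarith
  set w : E m := c⁻¹ • u with hw
  have hwj : ∀ j, w j = c⁻¹ * u j := by
    intro j; rw [hw]; simp
  have hwabs : ∀ j, |w j| ≤ 1 := by
    intro j
    rw [hwj j, abs_mul, abs_inv, abs_of_pos hcpos]
    have := hi j (Finset.mem_univ j)
    rw [inv_mul_le_iff₀ hcpos, mul_one]
    exact this
  have hwi : |w i| = 1 := by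
    rw [hwj i, abs_mul, abs_inv, abs_of_pos hcpos, ← hc]
    field_simp
  have hnw : ‖w‖ = c⁻¹ * r := by
    rw [hw, norm_smul, hnu, Real.norm_eq_abs, abs_of_pos (inv_pos.2 hcpos)]
  have hmap : sphMap x r w = v := by
    rw [sphMap]
    have h1 : (r * ‖w‖⁻¹) • w = u := by
      rw [hnw, hw, smul_smul]
      have : r * (c⁻¹ * r)⁻¹ * c⁻¹ = 1 := by
        field_simp
      rw [this, one_smul]
    rw [h1, hu]
    abel
  have hwface : ∃ s : Bool, w ∈ face m i s := by
    rcases abs_eq (by norm_num : (0:ℝ) ≤ 1) |>.mp hwi with h1 | h1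
    · exact ⟨true, by constructor <;> simp [h1, hwabs]⟩
    · exact ⟨false, by constructor <;> simp [h1, hwabs]⟩
  obtain ⟨s, hs⟩ := hwface
  exact ⟨w, Set.mem_iUnion.2 ⟨(i, s), hs⟩, hmap⟩

lemma sphMap_lip (x : E m) (r : ℝ) (hr : 0 < r) :
    LipschitzOnWith (2*r).toNNReal (sphMap x r)
      (⋃ (p : Fin (m+2) × Bool), face m p.1 p.2) := by
  apply LipschitzOnWith.of_dist_le_mul
  intro w hw v hv
  obtain ⟨pw, hpw⟩ := Set.mem_iUnion.1 hw
  obtain ⟨pv, hpv⟩ := Set.mem_iUnion.1 hv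
  have ha : 1 ≤ ‖w‖ := norm_ge_one_of_face hpw
  have hb : 1 ≤ ‖v‖ := norm_ge_one_of_face hpv
  have ha0 : ‖w‖ ≠ 0 := by linarith
  have hb0 : ‖v‖ ≠ 0 := by linarith
  rw [Real.coe_toNNReal _ (by linarith)]
  rw [sphMap, sphMap, dist_eq_norm]
  have hsimp : x + (r * ‖w‖⁻¹) • w - (x + (r * ‖v‖⁻¹) • v)
      = r • (‖w‖⁻¹ • w - ‖v‖⁻¹ • v) := by
    rw [smul_sub, smul_smul, smul_smul]
    abel_nf
  rw [hsimp, norm_smul, Real.norm_eq_abs, abs_of_pos hr]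
  have hkey : ‖‖w‖⁻¹ • w - ‖v‖⁻¹ • v‖ ≤ 2 * ‖w - v‖ := by
    have hdecomp : ‖w‖⁻¹ • w - ‖v‖⁻¹ • v
        = ‖w‖⁻¹ • (w - v) + (‖w‖⁻¹ - ‖v‖⁻¹) • v := by
      rw [smul_sub, sub_smul]
      abel
    rw [hdecomp]
    have h1 : ‖‖w‖⁻¹ • (w - v)‖ = ‖w‖⁻¹ * ‖w - v‖ := by
      rw [norm_smul, Real.norm_eq_abs, abs_of_pos (by positivity : (0:ℝ) < ‖w‖⁻¹)]
    have h2 : ‖(‖w‖⁻¹ - ‖v‖⁻¹) • v‖ = |‖w‖⁻¹ - ‖v‖⁻¹| * ‖v‖ := by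
      rw [norm_smul, Real.norm_eq_abs]
    have h3 : |‖w‖⁻¹ - ‖v‖⁻¹| * ‖v‖ ≤ ‖w - v‖ := by
      have hd : ‖w‖⁻¹ - ‖v‖⁻¹ = (‖v‖ - ‖w‖) / (‖w‖ * ‖v‖) := by
        field_simp
      rw [hd, abs_div]
      have hnn : |‖w‖ * ‖v‖| = ‖w‖ * ‖v‖ := abs_of_pos (by positivity)
      rw [hnn, div_mul_eq_mul_div, div_le_iff₀ (by positivity)]
      have habs : |‖v‖ - ‖w‖| ≤ ‖w - v‖ := by
        rw [abs_sub_comm]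
        exact abs_norm_sub_norm_le w v
      have h5 : |‖v‖ - ‖w‖| * ‖v‖ ≤ ‖w - v‖ * ‖v‖ :=
        mul_le_mul_of_nonneg_right habs (norm_nonneg v)
      nlinarith [h5, mul_nonneg (norm_nonneg (w - v)) (norm_nonneg v), ha, hb]
    have h4 : ‖w‖⁻¹ * ‖w - v‖ ≤ ‖w - v‖ := by
      have : ‖w‖⁻¹ ≤ 1 := by
        rw [inv_le_one_iff₀]; right; linarith
      nlinarith [norm_nonneg (w - v)]
    calc ‖‖w‖⁻¹ • (w - v) + (‖w‖⁻¹ - ‖v‖⁻¹) • v‖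
        ≤ ‖‖w‖⁻¹ • (w - v)‖ + ‖(‖w‖⁻¹ - ‖v‖⁻¹) • v‖ := norm_add_le _ _
      _ ≤ ‖w - v‖ + ‖w - v‖ := by rw [h1, h2]; linarith
      _ = 2 * ‖w - v‖ := by ring
  calc r * ‖‖w‖⁻¹ • w - ‖v‖⁻¹ • v‖ ≤ r * (2 * ‖w - v‖) := by nlinarith
    _ = 2 * r * dist w v := by rw [dist_eq_norm]; ring

lemma face_measure_ne_top (i : Fin (m+2)) (s : Bool) :
    μH[((m+1 : ℕ) : ℝ)] (face m i s) ≠ ⊤ := by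
  classical
  set ε : ℝ := if s then 1 else -1 with hε
  set emb : (Fin (m+1) → ℝ) → E m := fun u => WithLp.toLp 2 (i.insertNth ε u : Fin (m+2) → ℝ) with hemb
  have hembLip : LipschitzWith (Real.sqrt (m+1)).toNNReal emb := by
    apply LipschitzWith.of_dist_le_mul
    intro u v
    rw [Real.coe_toNNReal _ (Real.sqrt_nonneg _)]
    have hco : ∀ j : Fin (m+2), |emb u j - emb v j| ≤ dist u v := by
      intro j
      rcases eq_or_ne j i with rfl | hj
      · simp only [hemb, Fin.insertNth_apply_same]
        simp [dist_nonneg]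
      · obtain ⟨j', rfl⟩ := Fin.exists_succAbove_eq hj
        simp only [hemb, Fin.insertNth_apply_succAbove]
        rw [← Real.dist_eq]
        exact dist_le_pi_dist u v j'
    -- same computation as dist_le_of_coords but only m+1 nonzero coords
    rw [EuclideanSpace.dist_eq]
    have hb : ∑ j, dist (emb u j) (emb v j)^2 ≤ (m+1) * (dist u v)^2 := by
      rw [Fin.sum_univ_succAbove _ i]
      have hzero : dist (emb u i) (emb v i) = 0 := by
        simp only [hemb]
        simp [Fin.insertNth_apply_same]
      rw [hzero]
      have hrest : ∀ j' : Fin (m+1),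
          dist (emb u (i.succAbove j')) (emb v (i.succAbove j'))^2 ≤ (dist u v)^2 := by
        intro j'
        have h1 := hco (i.succAbove j')
        rw [← Real.dist_eq] at h1
        nlinarith [dist_nonneg (x := emb u (i.succAbove j')) (y := emb v (i.succAbove j'))]
      calc (0:ℝ)^2 + ∑ j' : Fin (m+1),
            dist (emb u (i.succAbove j')) (emb v (i.succAbove j'))^2
          ≤ 0 + ∑ _j' : Fin (m+1), (dist u v)^2 := by
            rw [zero_pow (by norm_num)]
            exact add_le_add le_rfl (Finset.sum_le_sum (fun j' _ => hrest j'))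
        _ = (m+1) * (dist u v)^2 := by
            rw [zero_add, Finset.sum_const, Finset.card_univ, Fintype.card_fin]
            push_cast
            ring
    calc Real.sqrt (∑ j, dist (emb u j) (emb v j)^2)
        ≤ Real.sqrt ((m+1) * (dist u v)^2) := Real.sqrt_le_sqrt hb
      _ = Real.sqrt (m+1) * dist u v := by
          rw [Real.sqrt_mul (by positivity), Real.sqrt_sq dist_nonneg]
  have hsub : face m i s ⊆ emb '' (Set.pi Set.univ (fun _ : Fin (m+1) => Icc (-1:ℝ) 1)) := by
    rintro w ⟨h1, h2⟩
    refine ⟨fun j' => w (i.succAbove j'), ?_, ?_⟩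
    · intro j' _
      have := h2 (i.succAbove j')
      rw [abs_le] at this
      exact this
    · ext j
      rcases eq_or_ne j i with rfl | hj
      · simp only [hemb, Fin.insertNth_apply_same]
        rw [h1]
      · obtain ⟨j', rfl⟩ := Fin.exists_succAbove_eq hj
        simp only [hemb, Fin.insertNth_apply_succAbove]
  have hboxvol : μH[((m+1 : ℕ) : ℝ)]
      (Set.pi Set.univ (fun _ : Fin (m+1) => Icc (-1:ℝ) 1)) ≠ ⊤ := by
    have hcard : (Fintype.card (Fin (m+1)) : ℝ) = ((m+1 : ℕ) : ℝ) := by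
      rw [Fintype.card_fin]
    rw [← hcard, hausdorffMeasure_pi_real, volume_pi_pi]
    simp only [Real.volume_Icc]
    rw [Finset.prod_const, Finset.card_univ, Fintype.card_fin]
    exact ENNReal.pow_ne_top ENNReal.ofReal_ne_top
  have himg := hembLip.hausdorffMeasure_image_le
    (by positivity : (0:ℝ) ≤ ((m+1 : ℕ) : ℝ))
    (Set.pi Set.univ (fun _ : Fin (m+1) => Icc (-1:ℝ) 1))
  have hle : μH[((m+1 : ℕ) : ℝ)] (face m i s)
      ≤ ((Real.sqrt (m+1)).toNNReal : ℝ≥0∞) ^ ((m+1 : ℕ) : ℝ) *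
        μH[((m+1 : ℕ) : ℝ)] (Set.pi Set.univ (fun _ : Fin (m+1) => Icc (-1:ℝ) 1)) :=
    le_trans (measure_mono hsub) himg
  intro htop
  rw [htop] at hle
  have hKne : ((Real.sqrt (m+1)).toNNReal : ℝ≥0∞) ^ ((m+1 : ℕ) : ℝ) ≠ ⊤ :=
    ENNReal.rpow_ne_top_of_nonneg (by positivity) ENNReal.coe_ne_top
  exact (ENNReal.mul_ne_top hKne hboxvol) (top_le_iff.mp hle)

lemma sphere_measure_ne_top (x : E m) (r : ℝ) (hr : 0 < r) :
    μH[((m+2 : ℕ) : ℝ) - 1] (sphere x r) ≠ ⊤ := by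
  rw [exp_cast]
  set T := ⋃ (p : Fin (m+2) × Bool), face m p.1 p.2 with hT
  have hTne : μH[((m+1 : ℕ) : ℝ)] T ≠ ⊤ := by
    have hle : μH[((m+1 : ℕ) : ℝ)] T ≤ ∑' (p : Fin (m+2) × Bool),
        μH[((m+1 : ℕ) : ℝ)] (face m p.1 p.2) := measure_iUnion_le _
    rw [tsum_fintype] at hle
    intro htop
    rw [htop] at hle
    have hfin : ∑ p : Fin (m+2) × Bool, μH[((m+1 : ℕ) : ℝ)] (face m p.1 p.2) ≠ ⊤ := by
      apply (ENNReal.sum_lt_top.2 ?_).ne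
      intro p _
      exact (face_measure_ne_top p.1 p.2).lt_top
    exact hfin (top_le_iff.mp hle)
  have himg := (sphMap_lip x r hr).hausdorffMeasure_image_le
    (by positivity : (0:ℝ) ≤ ((m+1 : ℕ) : ℝ))
  have hle : μH[((m+1 : ℕ) : ℝ)] (sphere x r)
      ≤ (((2*r).toNNReal : ℝ≥0∞)) ^ ((m+1 : ℕ) : ℝ) * μH[((m+1 : ℕ) : ℝ)] T :=
    le_trans (measure_mono (sphere_sub_image x r hr)) himg
  intro htop
  rw [htop] at hle
  have hKne : (((2*r).toNNReal : ℝ≥0∞)) ^ ((m+1 : ℕ) : ℝ) ≠ ⊤ :=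
    ENNReal.rpow_ne_top_of_nonneg (by positivity) ENNReal.coe_ne_top
  exact (ENNReal.mul_ne_top hKne hTne) (top_le_iff.mp hle)

end ELF

theorem example_local_fails (d : ℕ) (hd : 2 ≤ d) (C : ℝ) (hC : 0 < C) :
    ∃ 𝓑 : Set (Set (EuclideanSpace ℝ (Fin d))),
      (∀ B ∈ 𝓑, IsBall d B) ∧
      (∃ M : ℝ, ∀ B ∈ 𝓑, Metric.diam B ≤ M) ∧
      ¬ ∃ 𝓢 ⊆ 𝓑, 𝓢.Pairwise Disjoint ∧
          ∃ D : Set (EuclideanSpace ℝ (Fin d)) → Set (EuclideanSpace ℝ (Fin d)),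
            (mboundary d (⋃₀ 𝓑) = ⋃ S ∈ 𝓢, D S) ∧
            ∀ S ∈ 𝓢,
              (∃ (x : EuclideanSpace ℝ (Fin d)) (r : ℝ), 0 < r ∧
                ((S = ball x r ∧ D S ⊆ ball x (C * r)) ∨
                 (S = closedBall x r ∧ D S ⊆ closedBall x (C * r)))) ∧
              μH[(d : ℝ) - 1] (D S) ≤ ENNReal.ofReal C * μH[(d : ℝ) - 1] (frontier S) := by
  
  classical
  obtain ⟨m, rfl⟩ : ∃ m, d = m + 2 := ⟨d - 2, by omega⟩
  refine ⟨ELF.Balls m, ELF.balls_isBall, ⟨1, ELF.balls_diam⟩, ?_⟩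
  rintro ⟨𝓢, h𝓢B, hdisj, D, hcover, hprop⟩
  -- 𝓢 is countable
  have h𝓢c : 𝓢.Countable := by
    apply Set.PairwiseDisjoint.countable_of_nonempty_interior (s := fun S => S) hdisj
    intro S hS
    obtain ⟨x, r, hr, hor⟩ := (hprop S hS).1
    rcases hor with ⟨rfl, -⟩ | ⟨rfl, -⟩
    · rw [isOpen_ball.interior_eq]
      exact ⟨x, mem_ball_self hr⟩
    · exact ⟨x, interior_mono ball_subset_closedBall
        (by rw [isOpen_ball.interior_eq]; exact mem_ball_self hr)⟩
  -- every plate is inside the covered boundary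
  have hplate_sub : ∀ a : ℕ → Bool,
      ELF.plate m (ELF.pt a) ⊆ ⋃ S ∈ 𝓢, D S := by
    intro a z hz
    rw [← hcover]
    exact ELF.pt_mem_mboundary a z hz.1
  -- for each a, some piece has positive measure on the plate
  have hpos : ∀ a : ℕ → Bool, ∃ S, S ∈ 𝓢 ∧ ∃ n : ℕ,
      ((n : ℝ≥0∞))⁻¹ < μH[((m+2 : ℕ) : ℝ) - 1] (D S ∩ ELF.plate m (ELF.pt a)) := by
    intro a
    by_contra hc
    push_neg at hc
    have hzero : ∀ S ∈ 𝓢, μH[((m+2 : ℕ) : ℝ) - 1] (D S ∩ ELF.plate m (ELF.pt a)) = 0 := by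
      intro S hS
      by_contra h0
      obtain ⟨n, hn⟩ := ENNReal.exists_inv_nat_lt h0
      exact absurd hn (not_lt.2 (hc S hS n))
    have hsub2 : ELF.plate m (ELF.pt a) ⊆ ⋃ S ∈ 𝓢, (D S ∩ ELF.plate m (ELF.pt a)) := by
      intro z hz
      obtain ⟨S, hS1, hS2⟩ := Set.mem_iUnion₂.1 (hplate_sub a hz)
      exact Set.mem_iUnion₂.2 ⟨S, hS1, hS2, hz⟩
    have hle : μH[((m+2 : ℕ) : ℝ) - 1] (ELF.plate m (ELF.pt a))
        ≤ ∑' S : 𝓢, μH[((m+2 : ℕ) : ℝ) - 1] (D S ∩ ELF.plate m (ELF.pt a)) :=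
      le_trans (measure_mono hsub2) (measure_biUnion_le _ h𝓢c _)
    have hsum0 : ∑' S : 𝓢, μH[((m+2 : ℕ) : ℝ) - 1] (D S ∩ ELF.plate m (ELF.pt a)) = 0 := by
      apply ENNReal.tsum_eq_zero.2
      rintro ⟨S, hS⟩
      exact hzero S hS
    rw [hsum0] at hle
    have := ELF.plate_measure (m := m) (ELF.pt a)
    rw [le_zero_iff.1 hle] at this
    simp at this
  choose Sel hSel nSel hnSel using hpos
  -- a countable-fiber argument
  haveI : Countable ↥𝓢 := h𝓢c.to_subtype
  set ψ : (ℕ → Bool) → ↥𝓢 × ℕ := fun a => (⟨Sel a, hSel a⟩, nSel a) with hψ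
  have hfiber : ∃ p : ↥𝓢 × ℕ, ¬ (ψ ⁻¹' {p}).Countable := by
    by_contra hc
    push_neg at hc
    have huniv : (Set.univ : Set (ℕ → Bool)).Countable := by
      have : (Set.univ : Set (ℕ → Bool)) = ⋃ p : ↥𝓢 × ℕ, ψ ⁻¹' {p} := by
        ext a
        simp
      rw [this]
      exact Set.countable_iUnion hc
    exact ELF.not_countable_bool_seq (Set.countable_univ_iff.1 huniv)
  obtain ⟨⟨S₀, n₀⟩, hp₀⟩ := hfiber
  have hinf : (ψ ⁻¹' {(S₀, n₀)}).Infinite := by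
    intro hfin
    exact hp₀ hfin.countable
  set emb := hinf.natEmbedding with hembdef
  -- the chosen plates are pairwise disjoint with measure ≥ ε on D S₀
  set e : ℝ := ((m+2 : ℕ) : ℝ) - 1 with he
  set ν := (μH[e] : Measure (EuclideanSpace ℝ (Fin (m+2)))).restrict (D S₀.1) with hν
  have hplates : ∀ i : ℕ, ((n₀ : ℝ≥0∞))⁻¹ ≤ ν (ELF.plate m (ELF.pt (emb i).1)) := by
    intro i
    have hmem : ψ (emb i).1 = (S₀, n₀) := (emb i).2
    have h1 : Sel (emb i).1 = S₀.1 := by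
      have := congrArg (fun p => (p.1 : Set (EuclideanSpace ℝ (Fin (m+2))))) hmem
      simpa [hψ] using this
    have h2 : nSel (emb i).1 = n₀ := by
      have := congrArg Prod.snd hmem
      simpa [hψ] using this
    have := hnSel (emb i).1
    rw [h1, h2] at this
    rw [hν, Measure.restrict_apply (ELF.plate_measurable _)]
    rw [Set.inter_comm]
    exact this.le
  have hdisj2 : Pairwise (Function.onFun Disjoint
      (fun i : ℕ => ELF.plate m (ELF.pt (emb i).1))) := by
    intro i j hij
    apply ELF.plate_disj
    intro hpt
    have := ELF.pt_injective hpt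
    have hne : (emb i).1 ≠ (emb j).1 := by
      intro h
      exact hij (emb.injective (Subtype.ext h))
    exact hne this
  have hsum : ∑' i : ℕ, ν (ELF.plate m (ELF.pt (emb i).1))
      = ν (⋃ i, ELF.plate m (ELF.pt (emb i).1)) :=
    (measure_iUnion hdisj2 (fun i => ELF.plate_measurable _)).symm
  have htop : (⊤ : ℝ≥0∞) ≤ ν (⋃ i, ELF.plate m (ELF.pt (emb i).1)) := by
    rw [← hsum]
    have hεne : ((n₀ : ℝ≥0∞))⁻¹ ≠ 0 := by
      simp [ENNReal.inv_ne_zero]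
    calc (⊤:ℝ≥0∞) = ∑' _ : ℕ, ((n₀ : ℝ≥0∞))⁻¹ :=
          (ENNReal.tsum_const_eq_top_of_ne_zero hεne).symm
      _ ≤ ∑' i : ℕ, ν (ELF.plate m (ELF.pt (emb i).1)) := ENNReal.tsum_le_tsum hplates
  -- but ν is a finite measure
  have hfin : ν (⋃ i, ELF.plate m (ELF.pt (emb i).1)) ≠ ⊤ := by
    have h1 : ν (⋃ i, ELF.plate m (ELF.pt (emb i).1)) ≤ μH[e] (D S₀.1) := by
      rw [hν]
      calc (μH[e].restrict (D S₀.1)) (⋃ i, ELF.plate m (ELF.pt (emb i).1))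
          ≤ (μH[e].restrict (D S₀.1)) Set.univ := measure_mono (Set.subset_univ _)
        _ = μH[e] (D S₀.1) := by rw [Measure.restrict_apply_univ]
    have h2 := (hprop S₀.1 S₀.2).2
    -- frontier of a ball in our family is a sphere of finite measure
    obtain ⟨a, k, z, hSeq⟩ := h𝓢B S₀.2
    have hfr : frontier S₀.1 = sphere
        (ELF.mkpt (ELF.cw a (2*k) + 2 * ELF.q (2*k+1)) z) (ELF.q (2*k+1) / 2) := by
      rw [hSeq]
      exact frontier_closedBall _ (by have := ELF.q_pos (2*k+1); positivity)
    have hsph : μH[e] (frontier S₀.1) ≠ ⊤ := by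
      rw [hfr, he]
      exact ELF.sphere_measure_ne_top _ _ (by have := ELF.q_pos (2*k+1); positivity)
    have h3 : μH[e] (D S₀.1) ≠ ⊤ := by
      intro h4
      rw [he] at h4
      rw [h4] at h2
      have hne : ENNReal.ofReal C * μH[((m+2 : ℕ) : ℝ) - 1] (frontier S₀.1) ≠ ⊤ :=
        ENNReal.mul_ne_top ENNReal.ofReal_ne_top (he ▸ hsph)
      exact hne (top_le_iff.1 h2)
    intro h5
    rw [h5] at h1
    exact h3 (top_le_iff.1 h1)
  exact hfin (top_le_iff.1 htop)
end

section
/- Let f : ℝ → ℝ be a measurable function with var(f) < ∞. Then var(Mf) ≤ var(f), where Mf is the uncentered Hardy–Littlewood maximal function of f. -/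
open MeasureTheory Metric Set Filter Topology ENNReal NNReal

/-- The average `f_I = (1/λ(I)) ∫_I |f|` of `|f|` over a set `I`. -/
noncomputable def intervalAvg (f : ℝ → ℝ) (I : Set ℝ) : ℝ :=
  (∫ t in I, |f t|) / (volume I).toReal

/-- The uncentered Hardy–Littlewood maximal function
`Mf(x) = sup { f_I : I a bounded interval of positive length with x ∈ I }`. -/
noncomputable def maximalFn (f : ℝ → ℝ) (x : ℝ) : ℝ :=
  sSup {y : ℝ | ∃ I : Set ℝ, IsInterval I ∧ x ∈ I ∧ y = intervalAvg f I}

namespace MaxBV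

lemma measurableSet_of_between {I : Set ℝ} {a b : ℝ}
    (h1 : Ioo a b ⊆ I) (h2 : I ⊆ Icc a b) : MeasurableSet I := by
  have : I = Ioo a b ∪ (I ∩ {a, b}) := by
    apply Subset.antisymm
    · intro x hx
      rcases eq_or_lt_of_le (h2 hx).1 with h | h
      · exact Or.inr ⟨hx, Or.inl h.symm⟩
      rcases eq_or_lt_of_le (h2 hx).2 with h' | h'
      · exact Or.inr ⟨hx, Or.inr h'⟩
      · exact Or.inl ⟨h, h'⟩
    · rintro x (hx | hx)
      exacts [h1 hx, hx.1]
  rw [this]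
  exact measurableSet_Ioo.union
    ((((Set.toFinite ({a, b} : Set ℝ)).subset inter_subset_right).countable.measurableSet))

lemma volume_of_between {I : Set ℝ} {a b : ℝ} (hab : a < b)
    (h1 : Ioo a b ⊆ I) (h2 : I ⊆ Icc a b) : volume I = ENNReal.ofReal (b - a) := by
  refine le_antisymm ?_ ?_
  · calc volume I ≤ volume (Icc a b) := measure_mono h2
    _ = ENNReal.ofReal (b - a) := Real.volume_Icc
  · calc ENNReal.ofReal (b - a) = volume (Ioo a b) := Real.volume_Ioo.symm
    _ ≤ volume I := measure_mono h1

lemma volume_toReal_of_between {I : Set ℝ} {a b : ℝ} (hab : a < b)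
    (h1 : Ioo a b ⊆ I) (h2 : I ⊆ Icc a b) : (volume I).toReal = b - a := by
  rw [volume_of_between hab h1 h2, ENNReal.toReal_ofReal (by linarith)]

lemma integrableOn_abs {f : ℝ → ℝ} (hf : Measurable f) {C : ℝ} (hC : ∀ x, |f x| ≤ C)
    {I : Set ℝ} {a b : ℝ} (hab : a < b) (h1 : Ioo a b ⊆ I) (h2 : I ⊆ Icc a b) :
    IntegrableOn (fun t => |f t|) I := by
  have hvol : volume I < ⊤ := by
    rw [volume_of_between hab h1 h2]; exact ENNReal.ofReal_lt_top
  refine Integrable.mono' (g := fun _ => C) ?_ (hf.abs.aestronglyMeasurable.restrict) ?_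
  · exact integrableOn_const (C := C) hvol.ne
  · exact ae_of_all _ fun x => by simpa using hC x

lemma avg_nonneg {f : ℝ → ℝ} {I : Set ℝ} : 0 ≤ intervalAvg f I := by
  unfold intervalAvg
  apply div_nonneg _ ENNReal.toReal_nonneg
  exact setIntegral_nonneg_of_ae_restrict (ae_of_all _ fun x => abs_nonneg _)

lemma avg_le_bound {f : ℝ → ℝ} (hf : Measurable f) {C : ℝ} (hC : ∀ x, |f x| ≤ C)
    {I : Set ℝ} (hI : IsInterval I) : intervalAvg f I ≤ C := by
  obtain ⟨a, b, hab, h1, h2⟩ := hI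
  have hvol : (volume I).toReal = b - a := volume_toReal_of_between hab h1 h2
  have hC0 : 0 ≤ C := le_trans (abs_nonneg _) (hC 0)
  have hvollt : volume I < ⊤ := by
    rw [volume_of_between hab h1 h2]; exact ENNReal.ofReal_lt_top
  have h := norm_setIntegral_le_of_norm_le_const (f := fun t => |f t|) (C := C) hvollt
    (fun x _ => by simpa [Real.norm_eq_abs, abs_abs] using hC x)
  have h' : (∫ t in I, |f t|) ≤ C * (volume I).toReal :=
    le_trans (le_abs_self _) (by rw [← Real.norm_eq_abs]; exact h)
  unfold intervalAvg
  rw [div_le_iff₀ (by rw [hvol]; linarith)]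
  linarith [h']

lemma sup_set_nonempty (f : ℝ → ℝ) (x : ℝ) :
    {y : ℝ | ∃ I : Set ℝ, IsInterval I ∧ x ∈ I ∧ y = intervalAvg f I}.Nonempty := by
  refine ⟨intervalAvg f (Ioo (x-1) (x+1)), Ioo (x-1) (x+1), ⟨x-1, x+1, by linarith,
    Subset.rfl, Ioo_subset_Icc_self⟩, by constructor <;> [linarith; linarith], rfl⟩

lemma sup_set_bddAbove {f : ℝ → ℝ} (hf : Measurable f) {C : ℝ} (hC : ∀ x, |f x| ≤ C) (x : ℝ) :
    BddAbove {y : ℝ | ∃ I : Set ℝ, IsInterval I ∧ x ∈ I ∧ y = intervalAvg f I} := by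
  refine ⟨C, ?_⟩
  rintro y ⟨I, hI, -, rfl⟩
  exact avg_le_bound hf hC hI

lemma le_maximalFn {f : ℝ → ℝ} (hf : Measurable f) {C : ℝ} (hC : ∀ x, |f x| ≤ C)
    {I : Set ℝ} (hI : IsInterval I) {x : ℝ} (hx : x ∈ I) :
    intervalAvg f I ≤ maximalFn f x :=
  le_csSup (sup_set_bddAbove hf hC x) ⟨I, hI, hx, rfl⟩

lemma maximalFn_nonneg {f : ℝ → ℝ} (hf : Measurable f) {C : ℝ} (hC : ∀ x, |f x| ≤ C) (x : ℝ) :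
    0 ≤ maximalFn f x := by
  refine le_trans avg_nonneg (le_maximalFn hf hC (I := Ioo (x-1) (x+1))
    ⟨x-1, x+1, by linarith, Subset.rfl, Ioo_subset_Icc_self⟩ ?_)
  constructor <;> [linarith; linarith]

lemma exists_avg_gt {f : ℝ → ℝ} {x y : ℝ} (h : y < maximalFn f x) :
    ∃ I : Set ℝ, IsInterval I ∧ x ∈ I ∧ y < intervalAvg f I := by
  obtain ⟨z, ⟨I, hI, hx, rfl⟩, hz⟩ := exists_lt_of_lt_csSup (sup_set_nonempty f x) h
  exact ⟨I, hI, hx, hz⟩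

lemma exists_ge_avg {f : ℝ → ℝ} (hf : Measurable f) {C : ℝ} (hC : ∀ x, |f x| ≤ C)
    {I : Set ℝ} {a b : ℝ} (hab : a < b) (h1 : Ioo a b ⊆ I) (h2 : I ⊆ Icc a b) :
    ∃ c ∈ I, intervalAvg f I ≤ |f c| := by
  by_contra hcon
  push_neg at hcon
  set A := intervalAvg f I with hA
  have hvol : (volume I).toReal = b - a := volume_toReal_of_between hab h1 h2
  have hvolpos : (0:ℝ) < (volume I).toReal := by rw [hvol]; linarith
  have hvollt : volume I < ⊤ := by
    rw [volume_of_between hab h1 h2]; exact ENNReal.ofReal_lt_top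
  have hint : IntegrableOn (fun t => |f t|) I := integrableOn_abs hf hC hab h1 h2
  have hIA : (∫ t in I, |f t|) = A * (volume I).toReal := by
    rw [hA]; unfold intervalAvg; field_simp
  have hmeas : MeasurableSet I := measurableSet_of_between h1 h2
  have hintA : IntegrableOn (fun _ => A) I := integrableOn_const hvollt.ne
  have hpos : 0 < ∫ t in I, (A - |f t|) := by
    rw [setIntegral_pos_iff_support_of_nonneg_ae]
    · have : I ⊆ Function.support (fun t => A - |f t|) := by
        intro x hx
        simp only [Function.mem_support]
        have := hcon x hx
        intro h0
        linarith [sub_eq_zero.mp h0]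
      have : Function.support (fun t => A - |f t|) ∩ I = I :=
        Subset.antisymm inter_subset_right (subset_inter this Subset.rfl)
      rw [this, volume_of_between hab h1 h2]
      exact ENNReal.ofReal_pos.2 (by linarith)
    · exact (ae_restrict_iff' hmeas).2 (ae_of_all _ fun x hx => by have := hcon x hx; simp only [Pi.zero_apply]; linarith)
    · exact hintA.sub hint
  rw [integral_sub hintA hint, setIntegral_const, smul_eq_mul, hIA, measureReal_def] at hpos
  linarith

lemma exists_le_avg {f : ℝ → ℝ} (hf : Measurable f) {C : ℝ} (hC : ∀ x, |f x| ≤ C)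
    {I : Set ℝ} {a b : ℝ} (hab : a < b) (h1 : Ioo a b ⊆ I) (h2 : I ⊆ Icc a b) :
    ∃ c ∈ I, |f c| ≤ intervalAvg f I := by
  by_contra hcon
  push_neg at hcon
  set A := intervalAvg f I with hA
  have hvol : (volume I).toReal = b - a := volume_toReal_of_between hab h1 h2
  have hvolpos : (0:ℝ) < (volume I).toReal := by rw [hvol]; linarith
  have hvollt : volume I < ⊤ := by
    rw [volume_of_between hab h1 h2]; exact ENNReal.ofReal_lt_top
  have hint : IntegrableOn (fun t => |f t|) I := integrableOn_abs hf hC hab h1 h2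
  have hIA : (∫ t in I, |f t|) = A * (volume I).toReal := by
    rw [hA]; unfold intervalAvg; field_simp
  have hmeas : MeasurableSet I := measurableSet_of_between h1 h2
  have hintA : IntegrableOn (fun _ => A) I := integrableOn_const hvollt.ne
  have hpos : 0 < ∫ t in I, (|f t| - A) := by
    rw [setIntegral_pos_iff_support_of_nonneg_ae]
    · have : I ⊆ Function.support (fun t => |f t| - A) := by
        intro x hx
        simp only [Function.mem_support]
        have := hcon x hx
        intro h0
        linarith [sub_eq_zero.mp h0]
      have : Function.support (fun t => |f t| - A) ∩ I = I :=
        Subset.antisymm inter_subset_right (subset_inter this Subset.rfl)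
      rw [this, volume_of_between hab h1 h2]
      exact ENNReal.ofReal_pos.2 (by linarith)
    · exact (ae_restrict_iff' hmeas).2 (ae_of_all _ fun x hx => by have := hcon x hx; simp only [Pi.zero_apply]; linarith)
    · exact hint.sub hintA
  rw [integral_sub hint hintA, setIntegral_const, smul_eq_mul, hIA, measureReal_def] at hpos
  linarith

lemma integrableOn_abs' {f : ℝ → ℝ} (hf : Measurable f) {C : ℝ} (hC : ∀ x, |f x| ≤ C)
    {s : Set ℝ} (hs : volume s < ⊤) : IntegrableOn (fun t => |f t|) s := by
  refine Integrable.mono' (g := fun _ => C) (integrableOn_const hs.ne)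
    (hf.abs.aestronglyMeasurable.restrict) (ae_of_all _ fun x => by simpa using hC x)

lemma left_bound_of_avg_gt {f : ℝ → ℝ} (hf : Measurable f) {C : ℝ} (hC : ∀ x, |f x| ≤ C)
    {I : Set ℝ} {a b : ℝ} (hab : a < b) (h1 : Ioo a b ⊆ I) (h2 : I ⊆ Icc a b)
    {p q : ℝ} (hpq : p < q) (hq : q ∈ I) (havg : maximalFn f p < intervalAvg f I) :
    p ≤ a := by
  by_contra hcon
  push_neg at hcon
  have hpI : p ∈ I := h1 ⟨hcon, lt_of_lt_of_le hpq (h2 hq).2⟩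
  exact absurd (le_maximalFn hf hC ⟨a, b, hab, h1, h2⟩ hpI) (not_le.2 havg)

lemma right_bound_of_avg_gt {f : ℝ → ℝ} (hf : Measurable f) {C : ℝ} (hC : ∀ x, |f x| ≤ C)
    {I : Set ℝ} {a b : ℝ} (hab : a < b) (h1 : Ioo a b ⊆ I) (h2 : I ⊆ Icc a b)
    {p q : ℝ} (hpq : q < p) (hq : q ∈ I) (havg : maximalFn f p < intervalAvg f I) :
    b ≤ p := by
  by_contra hcon
  push_neg at hcon
  have hpI : p ∈ I := h1 ⟨lt_of_le_of_lt (h2 hq).1 hpq, hcon⟩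
  exact absurd (le_maximalFn hf hC ⟨a, b, hab, h1, h2⟩ hpI) (not_le.2 havg)

lemma hull_left {f : ℝ → ℝ} (hf : Measurable f) {C : ℝ} (hC : ∀ x, |f x| ≤ C)
    {I : Set ℝ} {a b : ℝ} (hab : a < b) (h1 : Ioo a b ⊆ I) (h2 : I ⊆ Icc a b)
    {m : ℝ} (hm : m ≤ a) (havg : maximalFn f m < intervalAvg f I) :
    ∃ c, m ≤ c ∧ c ≤ a ∧ |f c| ≤ maximalFn f m := by
  set M0 := maximalFn f m with hM0
  have hmb : m < b := lt_of_le_of_lt hm hab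
  set J := Icc m a ∪ I with hJ
  have hJ1 : Ioo m b ⊆ J := by
    intro x hx
    rcases le_or_gt x a with h | h
    · exact Or.inl ⟨le_of_lt hx.1, h⟩
    · exact Or.inr (h1 ⟨h, hx.2⟩)
  have hJ2 : J ⊆ Icc m b := by
    rintro x (hx | hx)
    · exact ⟨hx.1, le_trans hx.2 (le_of_lt hab)⟩
    · exact ⟨le_trans hm (h2 hx).1, (h2 hx).2⟩
  have hmJ : m ∈ J := Or.inl ⟨le_refl m, hm⟩
  have havgJ : intervalAvg f J ≤ M0 := le_maximalFn hf hC ⟨m, b, hmb, hJ1, hJ2⟩ hmJ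
  have hvolJ : (volume J).toReal = b - m := volume_toReal_of_between hmb hJ1 hJ2
  have hvolI : (volume I).toReal = b - a := volume_toReal_of_between hab h1 h2
  have hvolK : (volume (Icc m a)).toReal = a - m := by
    rw [Real.volume_Icc, ENNReal.toReal_ofReal (by linarith)]
  have hintI : IntegrableOn (fun t => |f t|) I :=
    integrableOn_abs' hf hC (by rw [volume_of_between hab h1 h2]; exact ENNReal.ofReal_lt_top)
  have hintK : IntegrableOn (fun t => |f t|) (Icc m a) :=
    integrableOn_abs' hf hC (by rw [Real.volume_Icc]; exact ENNReal.ofReal_lt_top)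
  have hdisj : AEDisjoint volume (Icc m a) I := by
    refine measure_mono_null (fun x hx => ?_) (Real.volume_singleton (a := a))
    have h1' : x ≤ a := hx.1.2
    have h2' : a ≤ x := (h2 hx.2).1
    exact le_antisymm h1' h2'
  have hsplit : (∫ t in J, |f t|) = (∫ t in Icc m a, |f t|) + ∫ t in I, |f t| := by
    rw [hJ]
    exact integral_union_ae hdisj (measurableSet_of_between h1 h2).nullMeasurableSet hintK hintI
  set B := ∫ t in Icc m a, |f t| with hB
  set A := ∫ t in I, |f t| with hA2
  have hBnn : 0 ≤ B := setIntegral_nonneg measurableSet_Icc (fun x _ => abs_nonneg _)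
  have hfromJ : B + A ≤ M0 * (b - m) := by
    have : intervalAvg f J = (B + A) / (b - m) := by
      unfold intervalAvg; rw [hvolJ, hsplit]
    rw [this] at havgJ
    rw [div_le_iff₀ (by linarith)] at havgJ
    linarith
  have hfromI : M0 * (b - a) < A := by
    have : intervalAvg f I = A / (b - a) := by unfold intervalAvg; rw [hvolI]
    rw [this] at havg
    rw [lt_div_iff₀ (by linarith)] at havg
    linarith
  have hBlt : B < M0 * (a - m) := by nlinarith
  have hma : m < a := by
    rcases lt_or_eq_of_le hm with h | h
    · exact h
    · exfalso; rw [← h] at hBlt; simp at hBlt; linarith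
  obtain ⟨c, hcK, hc⟩ := exists_le_avg hf hC hma Ioo_subset_Icc_self Subset.rfl
  have havgK : intervalAvg f (Icc m a) < M0 := by
    have : intervalAvg f (Icc m a) = B / (a - m) := by unfold intervalAvg; rw [hvolK]
    rw [this, div_lt_iff₀ (by linarith)]
    linarith
  exact ⟨c, hcK.1, hcK.2, le_of_lt (lt_of_le_of_lt hc havgK)⟩

lemma hull_right {f : ℝ → ℝ} (hf : Measurable f) {C : ℝ} (hC : ∀ x, |f x| ≤ C)
    {I : Set ℝ} {a b : ℝ} (hab : a < b) (h1 : Ioo a b ⊆ I) (h2 : I ⊆ Icc a b)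
    {m : ℝ} (hm : b ≤ m) (havg : maximalFn f m < intervalAvg f I) :
    ∃ c, b ≤ c ∧ c ≤ m ∧ |f c| ≤ maximalFn f m := by
  set M0 := maximalFn f m with hM0
  have hmb : a < m := lt_of_lt_of_le hab hm
  set J := I ∪ Icc b m with hJ
  have hJ1 : Ioo a m ⊆ J := by
    intro x hx
    rcases lt_or_ge x b with h | h
    · exact Or.inl (h1 ⟨hx.1, h⟩)
    · exact Or.inr ⟨h, le_of_lt hx.2⟩
  have hJ2 : J ⊆ Icc a m := by
    rintro x (hx | hx)
    · exact ⟨(h2 hx).1, le_trans (h2 hx).2 hm⟩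
    · exact ⟨le_trans (le_of_lt hab) hx.1, hx.2⟩
  have hmJ : m ∈ J := Or.inr ⟨hm, le_refl m⟩
  have havgJ : intervalAvg f J ≤ M0 := le_maximalFn hf hC ⟨a, m, hmb, hJ1, hJ2⟩ hmJ
  have hvolJ : (volume J).toReal = m - a := volume_toReal_of_between hmb hJ1 hJ2
  have hvolI : (volume I).toReal = b - a := volume_toReal_of_between hab h1 h2
  have hvolK : (volume (Icc b m)).toReal = m - b := by
    rw [Real.volume_Icc, ENNReal.toReal_ofReal (by linarith)]
  have hintI : IntegrableOn (fun t => |f t|) I :=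
    integrableOn_abs' hf hC (by rw [volume_of_between hab h1 h2]; exact ENNReal.ofReal_lt_top)
  have hintK : IntegrableOn (fun t => |f t|) (Icc b m) :=
    integrableOn_abs' hf hC (by rw [Real.volume_Icc]; exact ENNReal.ofReal_lt_top)
  have hdisj : AEDisjoint volume I (Icc b m) := by
    refine measure_mono_null (fun x hx => ?_) (Real.volume_singleton (a := b))
    exact le_antisymm (h2 hx.1).2 hx.2.1
  have hsplit : (∫ t in J, |f t|) = (∫ t in I, |f t|) + ∫ t in Icc b m, |f t| := by
    rw [hJ]
    exact integral_union_ae hdisj measurableSet_Icc.nullMeasurableSet hintI hintK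
  set B := ∫ t in Icc b m, |f t| with hB
  set A := ∫ t in I, |f t| with hA2
  have hBnn : 0 ≤ B := setIntegral_nonneg measurableSet_Icc (fun x _ => abs_nonneg _)
  have hfromJ : A + B ≤ M0 * (m - a) := by
    have : intervalAvg f J = (A + B) / (m - a) := by
      unfold intervalAvg; rw [hvolJ, hsplit]
    rw [this] at havgJ
    rw [div_le_iff₀ (by linarith)] at havgJ
    linarith
  have hfromI : M0 * (b - a) < A := by
    have : intervalAvg f I = A / (b - a) := by unfold intervalAvg; rw [hvolI]
    rw [this] at havg
    rw [lt_div_iff₀ (by linarith)] at havg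
    linarith
  have hBlt : B < M0 * (m - b) := by nlinarith
  have hma : b < m := by
    rcases lt_or_eq_of_le hm with h | h
    · exact h
    · exfalso; rw [h] at hBlt; simp at hBlt; linarith
  obtain ⟨c, hcK, hc⟩ := exists_le_avg hf hC hma Ioo_subset_Icc_self Subset.rfl
  have havgK : intervalAvg f (Icc b m) < M0 := by
    have : intervalAvg f (Icc b m) = B / (m - b) := by unfold intervalAvg; rw [hvolK]
    rw [this, div_lt_iff₀ (by linarith)]
    linarith
  exact ⟨c, hcK.1, hcK.2, le_of_lt (lt_of_le_of_lt hc havgK)⟩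


lemma abs_add_same_sign {e d : ℝ} (he : e ≠ 0) (hd : d ≠ 0) (hs : 0 < e ↔ 0 < d) :
    |e + d| = |e| + |d| := by
  rcases lt_or_gt_of_ne he with h | h
  · have hd' : d < 0 := by
      rcases lt_or_gt_of_ne hd with h' | h'
      · exact h'
      · exact absurd (hs.2 h') (not_lt.2 (le_of_lt h))
    rw [abs_of_neg h, abs_of_neg hd', abs_of_neg (by linarith)]; ring
  · have hd' : 0 < d := hs.1 h
    rw [abs_of_pos h, abs_of_pos hd', abs_of_pos (by linarith)]

lemma exists_alternating (v : ℕ → ℝ) (n : ℕ) :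
    ∃ (k : ℕ) (φ : ℕ → ℕ), Monotone φ ∧ (∀ j, φ j ≤ n) ∧ v (φ k) = v n ∧
      (∀ j, j < k → v (φ j) ≠ v (φ (j+1))) ∧
      (∀ j, j + 1 < k → ((v (φ j) < v (φ (j+1))) ↔ ¬ (v (φ (j+1)) < v (φ (j+2))))) ∧
      (∑ i ∈ Finset.range n, |v (i+1) - v i|) ≤
        ∑ j ∈ Finset.range k, |v (φ (j+1)) - v (φ j)| := by
  induction n with
  | zero =>
    exact ⟨0, fun _ => 0, monotone_const, fun j => le_refl 0, rfl,
      fun j hj => absurd hj (Nat.not_lt_zero j),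
      fun j hj => absurd hj (Nat.not_lt_zero _), by simp⟩
  | succ n ih =>
    obtain ⟨k, φ, hmono, hle, hend, hstrict, halt, hsum⟩ := ih
    by_cases hd : v (n+1) = v (φ k)
    · refine ⟨k, φ, hmono, fun j => (hle j).trans (Nat.le_succ n), by rw [hd], hstrict, halt, ?_⟩
      rw [Finset.sum_range_succ]
      have h0 : |v (n+1) - v n| = 0 := by rw [hd, hend]; simp
      rw [h0, add_zero]; exact hsum
    · rcases Nat.eq_zero_or_pos k with hk0 | hkpos
      · subst hk0
        classical
        set ψ : ℕ → ℕ := fun j => if j = 0 then φ 0 else n+1 with hψ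
        have hψ0 : ψ 0 = φ 0 := by simp [hψ]
        have hψ1 : ∀ j, j ≠ 0 → ψ j = n + 1 := fun j hj => by simp [hψ, hj]
        refine ⟨1, ψ, ?_, ?_, ?_, ?_, ?_, ?_⟩
        · intro i j hij
          by_cases hi : i = 0
          · by_cases hj : j = 0
            · simp [hψ, hi, hj]
            · rw [hi, hψ0, hψ1 j hj]; exact (hle 0).trans (Nat.le_succ n)
          · have hj : j ≠ 0 := by omega
            rw [hψ1 i hi, hψ1 j hj]
        · intro j
          by_cases hj : j = 0
          · rw [hj, hψ0]; exact (hle 0).trans (Nat.le_succ n)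
          · rw [hψ1 j hj]
        · rw [hψ1 1 (by omega)]
        · intro j hj
          have hj0 : j = 0 := by omega
          subst hj0
          rw [hψ0, hψ1 1 (by omega), hend]
          exact fun h => hd (h.symm.trans hend.symm)
        · intro j hj; omega
        · rw [Finset.sum_range_succ (n := n), Finset.sum_range_one]
          simp only [Nat.zero_add]
          rw [hψ0, hψ1 1 (by omega)]
          have h1 : (∑ i ∈ Finset.range n, |v (i+1) - v i|) ≤ 0 := by simpa using hsum
          have h2 : |v (n+1) - v n| = |v (n+1) - v (φ 0)| := by rw [hend]
          rw [h2]
          linarith [abs_nonneg (v (n+1) - v (φ 0))]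
      · obtain ⟨k₀, rfl⟩ : ∃ k₀, k = k₀ + 1 := ⟨k - 1, by omega⟩
        classical
        have he : v (φ (k₀+1)) - v (φ k₀) ≠ 0 :=
          sub_ne_zero.2 (Ne.symm (hstrict k₀ (by omega)))
        have hd' : v (n+1) - v (φ (k₀+1)) ≠ 0 := sub_ne_zero.2 hd
        set e := v (φ (k₀+1)) - v (φ k₀) with hee
        set d := v (n+1) - v (φ (k₀+1)) with hdd
        by_cases hsign : (0 < e ↔ 0 < d)
        · -- replace last point by n+1
          set ψ : ℕ → ℕ := fun j => if j ≤ k₀ then φ j else n+1 with hψ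
          have hψa : ∀ j, j ≤ k₀ → ψ j = φ j := fun j hj => by simp [hψ, hj]
          have hψb : ∀ j, ¬ (j ≤ k₀) → ψ j = n + 1 := fun j hj => by simp [hψ, hj]
          have hsame : (0 < e) ↔ (0 < e + d) := by
            constructor
            · intro h; have := hsign.1 h; linarith
            · intro h
              by_contra hcon
              have h1 : e < 0 := lt_of_le_of_ne (not_lt.1 hcon) he
              have h2 : ¬ (0 < d) := fun hh => hcon (hsign.2 hh)
              have h3 : d < 0 := lt_of_le_of_ne (not_lt.1 h2) hd'
              linarith
          refine ⟨k₀ + 1, ψ, ?_, ?_, ?_, ?_, ?_, ?_⟩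
          · intro i j hij
            by_cases hj : j ≤ k₀
            · rw [hψa i (le_trans hij hj), hψa j hj]; exact hmono hij
            · by_cases hi : i ≤ k₀
              · rw [hψa i hi, hψb j hj]; exact (hle i).trans (Nat.le_succ n)
              · rw [hψb i hi, hψb j hj]
          · intro j
            by_cases hj : j ≤ k₀
            · rw [hψa j hj]; exact (hle j).trans (Nat.le_succ n)
            · rw [hψb j hj]
          · rw [hψb (k₀+1) (by omega)]
          · intro j hj
            by_cases hj' : j + 1 ≤ k₀
            · rw [hψa j (by omega), hψa (j+1) hj']
              exact hstrict j (by omega)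
            · have hj0 : j = k₀ := by omega
              rw [hψa j (by omega), hψb (j+1) (by omega), hj0]
              intro hcon
              have h0 : e + d ≠ 0 := by
                rcases lt_or_gt_of_ne he with h | h
                · have h2 : ¬ (0 < d) := fun hh => absurd (hsign.2 hh) (not_lt.2 (le_of_lt h))
                  have h3 : d < 0 := lt_of_le_of_ne (not_lt.1 h2) hd'
                  linarith
                · linarith [hsign.1 h]
              apply h0
              rw [hee, hdd, ← hcon]; ring
          · intro j hj
            by_cases hj' : j + 2 ≤ k₀
            · rw [hψa j (by omega), hψa (j+1) (by omega), hψa (j+2) hj']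
              exact halt j (by omega)
            · have hj0 : j + 1 = k₀ := by omega
              rw [hψa j (by omega), hψa (j+1) (by omega), hψb (j+2) (by omega)]
              have horig := halt j (by omega)
              have hiff : (v (φ (j+1)) < v (φ (j+2))) ↔ (v (φ (j+1)) < v (n+1)) := by
                have hj2 : j + 2 = k₀ + 1 := by omega
                rw [hj2]
                have hl : (v (φ (j+1)) < v (φ (k₀+1))) ↔ 0 < e := by
                  rw [hee]
                  have : φ (j+1) = φ k₀ := by rw [hj0]
                  rw [this]
                  constructor <;> intro h <;> linarith
                have hr : (v (φ (j+1)) < v (n+1)) ↔ 0 < e + d := by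
                  have : φ (j+1) = φ k₀ := by rw [hj0]
                  rw [this, hee, hdd]
                  constructor <;> intro h <;> linarith
                rw [hl, hr]
                exact hsame
              rw [← hiff]
              exact horig
          · rw [Finset.sum_range_succ (n := n)]
            rw [Finset.sum_range_succ (n := k₀)]
            have hterms : ∀ j ∈ Finset.range k₀,
                |v (ψ (j+1)) - v (ψ j)| = |v (φ (j+1)) - v (φ j)| := by
              intro j hj
              rw [Finset.mem_range] at hj
              rw [hψa j (by omega), hψa (j+1) (by omega)]
            rw [Finset.sum_congr rfl hterms, hψb (k₀+1) (by omega), hψa k₀ (le_refl _)]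
            have hlast : |v (n+1) - v (φ k₀)| = |e| + |d| := by
              have h2 : v (n+1) - v (φ k₀) = e + d := by rw [hee, hdd]; ring
              rw [h2, abs_add_same_sign he hd' hsign]
            rw [hlast]
            have hold : (∑ i ∈ Finset.range n, |v (i+1) - v i|) ≤
                (∑ j ∈ Finset.range k₀, |v (φ (j+1)) - v (φ j)|) + |e| := by
              have h3 := hsum
              rw [Finset.sum_range_succ (n := k₀)] at h3
              rw [hee]
              exact h3
            have hnd : |v (n+1) - v n| = |d| := by rw [hdd, hend]
            rw [hnd]
            linarith
        · -- append n+1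
          set ψ : ℕ → ℕ := fun j => if j ≤ k₀ + 1 then φ j else n+1 with hψ
          have hψa : ∀ j, j ≤ k₀ + 1 → ψ j = φ j := fun j hj => by simp [hψ, hj]
          have hψb : ∀ j, ¬ (j ≤ k₀ + 1) → ψ j = n + 1 := fun j hj => by simp [hψ, hj]
          refine ⟨k₀ + 2, ψ, ?_, ?_, ?_, ?_, ?_, ?_⟩
          · intro i j hij
            by_cases hj : j ≤ k₀ + 1
            · rw [hψa i (le_trans hij hj), hψa j hj]; exact hmono hij
            · by_cases hi : i ≤ k₀ + 1
              · rw [hψa i hi, hψb j hj]; exact (hle i).trans (Nat.le_succ n)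
              · rw [hψb i hi, hψb j hj]
          · intro j
            by_cases hj : j ≤ k₀ + 1
            · rw [hψa j hj]; exact (hle j).trans (Nat.le_succ n)
            · rw [hψb j hj]
          · rw [hψb (k₀+2) (by omega)]
          · intro j hj
            by_cases hj' : j + 1 ≤ k₀ + 1
            · rw [hψa j (by omega), hψa (j+1) hj']
              exact hstrict j (by omega)
            · have hj0 : j = k₀ + 1 := by omega
              subst hj0
              rw [hψa (k₀+1) (le_refl _), hψb (k₀+2) (by omega)]
              exact fun h => hd h.symm
          · intro j hj
            by_cases hj' : j + 2 ≤ k₀ + 1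
            · rw [hψa j (by omega), hψa (j+1) (by omega), hψa (j+2) hj']
              exact halt j (by omega)
            · have hjk : j = k₀ := by omega
              rw [hψa j (by omega), hψa (j+1) (by omega), hψb (j+2) (by omega), hjk]
              have h1 : (v (φ k₀) < v (φ (k₀+1))) ↔ (0 < e) := by
                rw [hee]; constructor <;> intro h <;> linarith
              have h2 : (v (φ (k₀+1)) < v (n+1)) ↔ (0 < d) := by
                rw [hdd]; constructor <;> intro h <;> linarith
              rw [h1, h2]
              tauto
          · rw [Finset.sum_range_succ (n := n)]
            rw [Finset.sum_range_succ (n := k₀ + 1)]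
            have hterms : ∀ j ∈ Finset.range (k₀+1),
                |v (ψ (j+1)) - v (ψ j)| = |v (φ (j+1)) - v (φ j)| := by
              intro j hj
              rw [Finset.mem_range] at hj
              rw [hψa j (by omega), hψa (j+1) (by omega)]
            rw [Finset.sum_congr rfl hterms, hψb (k₀+2) (by omega), hψa (k₀+1) (le_refl _)]
            have hnd : |v (n+1) - v n| = |v (n+1) - v (φ (k₀+1))| := by rw [hend]
            rw [hnd]
            exact add_le_add hsum (le_refl _)


lemma main_est {f : ℝ → ℝ} (hf : Measurable f) {C : ℝ} (hC : ∀ x, |f x| ≤ C)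
    (hfin : eVariationOn (fun t => |f t|) Set.univ ≠ ⊤)
    (k : ℕ) (y : ℕ → ℝ) (hy : Monotone y)
    (hstrict : ∀ j, j < k → maximalFn f (y j) ≠ maximalFn f (y (j+1)))
    (halt : ∀ j, j + 1 < k → ((maximalFn f (y j) < maximalFn f (y (j+1))) ↔
      ¬ (maximalFn f (y (j+1)) < maximalFn f (y (j+2)))))
    {ε : ℝ} (hε : 0 < ε) :
    ∑ j ∈ Finset.range k, |maximalFn f (y (j+1)) - maximalFn f (y j)|
      ≤ (eVariationOn (fun t => |f t|) Set.univ).toReal + k * ε := by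
  classical
  rcases Nat.eq_zero_or_pos k with hk0 | hkpos
  · subst hk0
    simp [ENNReal.toReal_nonneg]
  set w : ℕ → ℝ := fun j => maximalFn f (y j) with hw
  -- edges have strictly increasing points
  have hylt : ∀ j, j < k → y j < y (j+1) := by
    intro j hj
    rcases lt_or_eq_of_le (hy (Nat.le_succ j)) with h | h
    · exact h
    · exact absurd (congrArg (maximalFn f) h) (hstrict j hj)
  -- peak predicate
  set IsPk : ℕ → Prop := fun j => j ≤ k ∧ (j < k → w (j+1) < w j) ∧
    (∀ i, i + 1 = j → w i < w j) with hIsPk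
  -- peak data
  have hpeakdata : ∀ j, ∃ (a b : ℝ) (I : Set ℝ) (p : ℝ), IsPk j →
      (a < b ∧ Ioo a b ⊆ I ∧ I ⊆ Icc a b ∧ y j ∈ I ∧ a ≤ p ∧ p ≤ b ∧
        w j - ε ≤ intervalAvg f I ∧ intervalAvg f I ≤ |f p| ∧
        (∀ i, i + 1 = j → w i < intervalAvg f I) ∧
        (j < k → w (j+1) < intervalAvg f I)) := by
    intro j
    by_cases hpk : IsPk j
    · set A : ℝ := if h : j = 0 then w j - ε else w (j-1) with hA
      set B : ℝ := if j < k then w (j+1) else w j - ε with hB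
      have hAlt : A < w j := by
        rw [hA]
        by_cases h : j = 0
        · rw [dif_pos h]; linarith
        · rw [dif_neg h]
          exact hpk.2.2 (j-1) (by omega)
      have hBlt : B < w j := by
        rw [hB]
        by_cases h : j < k
        · rw [if_pos h]; exact hpk.2.1 h
        · rw [if_neg h]; linarith
      set θ := max (w j - ε) (max A B) with hθ
      have hθlt : θ < w j := by
        rw [hθ]
        apply max_lt (by linarith) (max_lt hAlt hBlt)
      obtain ⟨I, hI, hyI, havg⟩ := exists_avg_gt (x := y j) hθlt
      obtain ⟨a, b, hab, h1, h2⟩ := hI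
      obtain ⟨p, hpI, hpavg⟩ := exists_ge_avg hf hC hab h1 h2
      refine ⟨a, b, I, p, fun _ => ⟨hab, h1, h2, hyI, (h2 hpI).1, (h2 hpI).2, ?_, hpavg, ?_, ?_⟩⟩
      · have : w j - ε ≤ θ := le_max_left _ _
        linarith
      · intro i hi
        have hine : ¬ (j = 0) := by omega
        have : w i = A := by rw [hA, dif_neg hine]; congr 1; omega
        have hA' : A ≤ θ := le_trans (le_max_left _ _) (le_max_right _ _)
        linarith [this]
      · intro hjk
        have : w (j+1) = B := by rw [hB, if_pos hjk]
        have hB' : B ≤ θ := le_trans (le_max_right _ _) (le_max_right _ _)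
        linarith [this]
    · exact ⟨0, 1, ∅, 0, fun h => absurd h hpk⟩
  choose pa pb pI pp hpdata using hpeakdata
  -- edge data
  have hedgedata : ∀ j, ∃ s t : ℝ, j < k →
      (s ≤ t ∧ |w (j+1) - w j| ≤ |(|f t| - |f s|)| + ε ∧
        (w j < w (j+1) → (y j ≤ s ∧ t = pp (j+1))) ∧
        (¬ (w j < w (j+1)) → (s = pp j ∧ t ≤ y (j+1)))) := by
    intro j
    by_cases hjk : j < k
    swap
    · exact ⟨0, 0, fun h => absurd h hjk⟩
    by_cases hup : w j < w (j+1)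
    · -- valley at j, peak at j+1
      have hpk : IsPk (j+1) := by
        refine ⟨by omega, ?_, ?_⟩
        · intro h
          have h2 := (halt j h).1 hup
          push_neg at h2
          exact lt_of_le_of_ne h2 (Ne.symm (hstrict (j+1) h))
        · intro i hi
          have : i = j := by omega
          rw [this]; exact hup
      obtain ⟨hab, h1, h2, hyI, hap, hpb, havg1, havg2, havg3, havg4⟩ := hpdata (j+1) hpk
      have havgj : w j < intervalAvg f (pI (j+1)) := havg3 j rfl
      have hyj : y j < y (j+1) := hylt j hjk
      have hyja : y j ≤ pa (j+1) :=
        left_bound_of_avg_gt hf hC hab h1 h2 hyj hyI havgj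
      obtain ⟨c, hc1, hc2, hc3⟩ := hull_left hf hC hab h1 h2 hyja havgj
      refine ⟨c, pp (j+1), fun _ => ⟨le_trans hc2 hap, ?_, fun _ => ⟨hc1, rfl⟩,
        fun h => absurd hup h⟩⟩
      have habs : |w (j+1) - w j| = w (j+1) - w j := abs_of_pos (by linarith)
      rw [habs]
      have hfc : |f c| ≤ w j := hc3
      have hfp : w (j+1) - ε ≤ |f (pp (j+1))| := by linarith
      calc w (j+1) - w j ≤ |f (pp (j+1))| - |f c| + ε := by linarith
        _ ≤ |(|f (pp (j+1))| - |f c|)| + ε := by linarith [le_abs_self (|f (pp (j+1))| - |f c|)]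
    · -- peak at j, valley at j+1
      have hdn : w (j+1) < w j := lt_of_le_of_ne (not_lt.1 hup) (Ne.symm (hstrict j hjk))
      have hpk : IsPk j := by
        refine ⟨by omega, fun _ => hdn, ?_⟩
        intro i hi
        have h3 := halt i (by omega)
        have h4 : ¬ (w (i+1) < w (i+2)) := by
          have e1 : i + 1 = j := hi
          have e2 : i + 2 = j + 1 := by omega
          rw [e1, e2]; exact hup
        have h5 := h3.2 h4
        have e1 : i + 1 = j := hi
        rw [e1] at h5; exact h5
      obtain ⟨hab, h1, h2, hyI, hap, hpb, havg1, havg2, havg3, havg4⟩ := hpdata j hpk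
      have havgj : w (j+1) < intervalAvg f (pI j) := havg4 hjk
      have hyj : y j < y (j+1) := hylt j hjk
      have hyjb : pb j ≤ y (j+1) :=
        right_bound_of_avg_gt hf hC hab h1 h2 hyj hyI havgj
      obtain ⟨c, hc1, hc2, hc3⟩ := hull_right hf hC hab h1 h2 hyjb havgj
      refine ⟨pp j, c, fun _ => ⟨le_trans hpb hc1, ?_, fun h => absurd h hup,
        fun _ => ⟨rfl, hc2⟩⟩⟩
      have habs : |w (j+1) - w j| = w j - w (j+1) := by rw [abs_of_neg (show w (j+1) - w j < 0 by linarith)]; ring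
      rw [habs]
      have hfc : |f c| ≤ w (j+1) := hc3
      have hfp : w j - ε ≤ |f (pp j)| := by linarith
      calc w j - w (j+1) ≤ |f (pp j)| - |f c| + ε := by linarith
        _ = -(|f c| - |f (pp j)|) + ε := by ring
        _ ≤ |(|f c| - |f (pp j)|)| + ε := by linarith [neg_abs_le (|f c| - |f (pp j)|)]
    done
  choose es et hedge using hedgedata
  -- cross-edge ordering
  have hcross : ∀ j, j + 1 < k → et j ≤ es (j+1) := by
    intro j hj
    obtain ⟨hst, hb, hupc, hdnc⟩ := hedge j (by omega)
    obtain ⟨hst', hb', hupc', hdnc'⟩ := hedge (j+1) hj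
    by_cases hup : w j < w (j+1)
    · have hnup : ¬ (w (j+1) < w (j+2)) := (halt j hj).1 hup
      rw [(hupc hup).2, (hdnc' hnup).1]
    · have hup' : w (j+1) < w (j+2) := by
        by_contra hcon
        exact hup ((halt j hj).2 hcon)
      calc et j ≤ y (j+1) := (hdnc hup).2
        _ ≤ es (j+1) := (hupc' hup').1
  -- the zigzag chain
  set z : ℕ → ℝ := fun i => if i < 2*k then (if i % 2 = 0 then es (i/2) else et (i/2))
    else et (k-1) with hz
  have hz1 : ∀ j, j < k → z (2*j) = es j := by
    intro j hj
    rw [hz]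
    simp only []
    rw [if_pos (by omega), if_pos (by omega)]
    congr 1; omega
  have hz2 : ∀ j, j < k → z (2*j+1) = et j := by
    intro j hj
    rw [hz]
    simp only []
    rw [if_pos (by omega), if_neg (by omega)]
    congr 1; omega
  have hzmono : Monotone z := by
    apply monotone_nat_of_le_succ
    intro i
    by_cases hi : i + 1 < 2*k
    · by_cases hpar : i % 2 = 0
      · obtain ⟨j, rfl⟩ : ∃ j, i = 2*j := ⟨i/2, by omega⟩
        have hj : j < k := by omega
        rw [hz1 j hj]
        have : 2*j+1 = 2*j+1 := rfl
        rw [hz2 j hj]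
        exact (hedge j hj).1
      · obtain ⟨j, rfl⟩ : ∃ j, i = 2*j+1 := ⟨i/2, by omega⟩
        have hj : j + 1 < k := by omega
        rw [hz2 j (by omega)]
        have h4 : 2*j+1+1 = 2*(j+1) := by ring
        rw [h4, hz1 (j+1) hj]
        exact hcross j hj
    · by_cases hi2 : i < 2*k
      · have hieq : i = 2*k-1 := by omega
        have hpar : ¬ (i % 2 = 0) := by omega
        have hz3 : z i = et (k-1) := by
          rw [hz]
          simp only []
          rw [if_pos hi2, if_neg hpar]
          congr 1; omega
        have hz4 : z (i+1) = et (k-1) := by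
          rw [hz]
          simp only []
          rw [if_neg (by omega)]
        rw [hz3, hz4]
      · have hz3 : z i = et (k-1) := by rw [hz]; simp only []; rw [if_neg hi2]
        have hz4 : z (i+1) = et (k-1) := by rw [hz]; simp only []; rw [if_neg (by omega)]
        rw [hz3, hz4]
  -- sum estimates
  have hsum1 : ∑ j ∈ Finset.range k, |w (j+1) - w j|
      ≤ (∑ j ∈ Finset.range k, |(|f (et j)| - |f (es j)|)|) + k * ε := by
    have h5 : ∀ j ∈ Finset.range k, |w (j+1) - w j| ≤ |(|f (et j)| - |f (es j)|)| + ε := by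
      intro j hj
      rw [Finset.mem_range] at hj
      exact (hedge j hj).2.1
    calc ∑ j ∈ Finset.range k, |w (j+1) - w j|
        ≤ ∑ j ∈ Finset.range k, (|(|f (et j)| - |f (es j)|)| + ε) := Finset.sum_le_sum h5
      _ = (∑ j ∈ Finset.range k, |(|f (et j)| - |f (es j)|)|) + k * ε := by
          rw [Finset.sum_add_distrib, Finset.sum_const, Finset.card_range, nsmul_eq_mul]
  have hsum2 : ∑ j ∈ Finset.range k, |(|f (et j)| - |f (es j)|)|
      = ∑ j ∈ Finset.range k, |(|f (z (2*j+1))| - |f (z (2*j))|)| := by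
    apply Finset.sum_congr rfl
    intro j hj
    rw [Finset.mem_range] at hj
    rw [hz1 j hj, hz2 j hj]
  have hsum3 : ∑ j ∈ Finset.range k, |(|f (z (2*j+1))| - |f (z (2*j))|)|
      ≤ ∑ i ∈ Finset.range (2*k), |(|f (z (i+1))| - |f (z i)|)| := by
    have himg : ∑ j ∈ Finset.range k, |(|f (z (2*j+1))| - |f (z (2*j))|)|
        = ∑ i ∈ (Finset.range k).image (fun j => 2*j), |(|f (z (i+1))| - |f (z i)|)| := by
      rw [Finset.sum_image (by intro a _ b _ h; have h' : 2*a = 2*b := h; omega)]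
    rw [himg]
    apply Finset.sum_le_sum_of_subset_of_nonneg
    · intro i hi
      simp only [Finset.mem_image, Finset.mem_range] at hi ⊢
      obtain ⟨j, hj, rfl⟩ := hi
      omega
    · intro i _ _
      exact abs_nonneg _
  have hsum4 : ∑ i ∈ Finset.range (2*k), |(|f (z (i+1))| - |f (z i)|)|
      ≤ (eVariationOn (fun t => |f t|) Set.univ).toReal := by
    have hvs := eVariationOn.sum_le (f := fun t => |f t|) (n := 2*k) hzmono (fun i => Set.mem_univ (z i))
    have heq : ∀ i, edist (|f (z (i+1))|) (|f (z i)|)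
        = ENNReal.ofReal (|(|f (z (i+1))| - |f (z i)|)|) := by
      intro i; rw [edist_dist, Real.dist_eq]
    have h6 : ENNReal.ofReal (∑ i ∈ Finset.range (2*k), |(|f (z (i+1))| - |f (z i)|)|)
        ≤ eVariationOn (fun t => |f t|) Set.univ := by
      rw [ENNReal.ofReal_sum_of_nonneg (fun i _ => abs_nonneg _)]
      calc ∑ i ∈ Finset.range (2*k), ENNReal.ofReal (|(|f (z (i+1))| - |f (z i)|)|)
          = ∑ i ∈ Finset.range (2*k), edist (|f (z (i+1))|) (|f (z i)|) := by
            apply Finset.sum_congr rfl; intro i _; rw [heq i]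
        _ ≤ eVariationOn (fun t => |f t|) Set.univ := hvs
    calc ∑ i ∈ Finset.range (2*k), |(|f (z (i+1))| - |f (z i)|)|
        = (ENNReal.ofReal (∑ i ∈ Finset.range (2*k), |(|f (z (i+1))| - |f (z i)|)|)).toReal := by
          rw [ENNReal.toReal_ofReal (Finset.sum_nonneg (fun i _ => abs_nonneg _))]
      _ ≤ (eVariationOn (fun t => |f t|) Set.univ).toReal := ENNReal.toReal_mono hfin h6
  calc ∑ j ∈ Finset.range k, |w (j+1) - w j|
      ≤ (∑ j ∈ Finset.range k, |(|f (et j)| - |f (es j)|)|) + k * ε := hsum1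
    _ ≤ (eVariationOn (fun t => |f t|) Set.univ).toReal + k * ε := by
        rw [hsum2]
        linarith [le_trans hsum3 hsum4]


end MaxBV

theorem var_maximalFn_le_var (f : ℝ → ℝ) (hf : Measurable f)
    (hvar : eVariationOn f Set.univ ≠ ⊤) :
    eVariationOn (maximalFn f) Set.univ ≤ eVariationOn f Set.univ := by
  classical
  set g : ℝ → ℝ := fun t => |f t| with hg
  -- variation of |f| is at most that of f
  have hgle : eVariationOn g Set.univ ≤ eVariationOn f Set.univ := by
    have hlip : LipschitzWith 1 (fun x : ℝ => |x|) := by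
      exact lipschitzWith_one_norm (E := ℝ)
    have := (hlip.lipschitzOnWith (s := f '' Set.univ)).comp_eVariationOn_le
      (Set.mapsTo_image f Set.univ)
    simp only [ENNReal.coe_one, one_mul] at this
    exact this
  have hgfin : eVariationOn g Set.univ ≠ ⊤ := by
    intro h
    exact hvar (top_le_iff.1 (h ▸ hgle))
  -- f is bounded
  set C : ℝ := |f 0| + (eVariationOn f Set.univ).toReal with hCdef
  have hC : ∀ x, |f x| ≤ C := by
    intro x
    have h1 : edist (f x) (f 0) ≤ eVariationOn f Set.univ :=
      eVariationOn.edist_le f (Set.mem_univ x) (Set.mem_univ 0)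
    have h2 : dist (f x) (f 0) ≤ (eVariationOn f Set.univ).toReal := by
      rw [dist_edist]
      exact ENNReal.toReal_mono hvar h1
    rw [Real.dist_eq] at h2
    calc |f x| = |f 0 + (f x - f 0)| := by ring_nf
      _ ≤ |f 0| + |f x - f 0| := abs_add_le _ _
      _ ≤ C := by rw [hCdef]; linarith
  -- main bound
  refine le_trans ?_ hgle
  rw [eVariationOn]
  apply iSup_le
  rintro ⟨n, u, hu, -⟩
  simp only []
  have hreal : ∑ i ∈ Finset.range n, |maximalFn f (u (i+1)) - maximalFn f (u i)|
      ≤ (eVariationOn g Set.univ).toReal := by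
    obtain ⟨k, φ, hφmono, hφle, hφend, hφstrict, hφalt, hφsum⟩ :=
      MaxBV.exists_alternating (fun i => maximalFn f (u i)) n
    refine le_trans hφsum ?_
    have hyy : Monotone (fun j => u (φ j)) := hu.comp hφmono
    apply _root_.le_of_forall_pos_le_add
    intro ε hε
    have hmain := MaxBV.main_est hf hC hgfin k (fun j => u (φ j)) hyy
      (fun j hj => hφstrict j hj) (fun j hj => hφalt j hj) (ε := ε / (k+1))
      (by positivity)
    refine le_trans hmain ?_
    have : (k : ℝ) * (ε / (k+1)) ≤ ε := by
      rw [div_eq_inv_mul, ← mul_assoc]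
      have h1 : (k : ℝ) * ((k:ℝ)+1)⁻¹ ≤ 1 := by
        rw [mul_inv_le_iff₀ (by positivity), one_mul]
        linarith
      calc (k : ℝ) * ((k:ℝ)+1)⁻¹ * ε ≤ 1 * ε := by nlinarith
        _ = ε := one_mul ε
    push_cast
    linarith
  calc ∑ i ∈ Finset.range n, edist (maximalFn f (u (i+1))) (maximalFn f (u i))
      = ENNReal.ofReal (∑ i ∈ Finset.range n,
          |maximalFn f (u (i+1)) - maximalFn f (u i)|) := by
        rw [ENNReal.ofReal_sum_of_nonneg (fun i _ => abs_nonneg _)]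
        apply Finset.sum_congr rfl
        intro i _
        rw [edist_dist, Real.dist_eq]
    _ ≤ eVariationOn g Set.univ := by
        rw [← ENNReal.ofReal_toReal hgfin]
        exact ENNReal.ofReal_le_ofReal hreal
end

section
/- Let I ⊆ ℝ be an interval and let E ⊆ ℝ be measurable. Then I ∩ ∂*E = ∅ if and only if I ⊆ int*(E) or I ⊆ int*(ℝ ∖ E). -/
open MeasureTheory Metric Set Filter Topology ENNReal NNReal

/-- The measure-theoretic interior `int*(E) = ℝ ∖ cl*(ℝ ∖ E)`. -/
noncomputable def minterior1 (E : Set ℝ) : Set ℝ :=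
  (mclosure1 Eᶜ)ᶜ

lemma tendsto_of_notMem {F : Set ℝ} {x : ℝ} (hx : x ∉ mclosure1 F) :
    Tendsto (fun r : ℝ => volume (Ioo (x - r) (x + r) ∩ F) / ENNReal.ofReal r)
      (𝓝[>] (0 : ℝ)) (𝓝 0) := by
  have h0 : limsup (fun r : ℝ => volume (Ioo (x - r) (x + r) ∩ F) / ENNReal.ofReal r)
      (𝓝[>] (0 : ℝ)) = 0 := by
    simp only [mclosure1, mem_setOf_eq, not_lt, le_zero_iff] at hx
    exact hx
  have h1 : liminf (fun r : ℝ => volume (Ioo (x - r) (x + r) ∩ F) / ENNReal.ofReal r)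
      (𝓝[>] (0 : ℝ)) = 0 := by
    refine le_antisymm ?_ zero_le
    rw [← h0]
    exact liminf_le_limsup
  exact tendsto_of_liminf_eq_limsup h1 h0

lemma mem_closure_or {E : Set ℝ} (hE : MeasurableSet E) (x : ℝ) :
    x ∈ mclosure1 E ∨ x ∈ mclosure1 Eᶜ := by
  by_contra hc
  push_neg at hc
  obtain ⟨h1, h2⟩ := hc
  have t3 := (tendsto_of_notMem h1).add (tendsto_of_notMem h2)
  rw [add_zero] at t3
  have heq : ∀ᶠ r in 𝓝[>] (0:ℝ),
      (volume (Ioo (x - r) (x + r) ∩ E) / ENNReal.ofReal r +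
       volume (Ioo (x - r) (x + r) ∩ Eᶜ) / ENNReal.ofReal r) = 2 := by
    filter_upwards [self_mem_nhdsWithin] with r hr
    have hr' : (0:ℝ) < r := hr
    rw [ENNReal.div_add_div_same, ← Set.diff_eq, measure_inter_add_diff _ hE,
      Real.volume_Ioo, show x + r - (x - r) = 2 * r by ring,
      ENNReal.ofReal_mul (by norm_num : (0:ℝ) ≤ 2),
      mul_div_assoc, ENNReal.div_self (by simpa using hr') ENNReal.ofReal_ne_top]
    simp
  have t4 : Tendsto (fun _ : ℝ => (2 : ℝ≥0∞)) (𝓝[>] (0:ℝ)) (𝓝 0) := t3.congr' heq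
  have := tendsto_nhds_unique t4 tendsto_const_nhds
  simp at this

lemma uIoc_small {F : Set ℝ} {x : ℝ} (hx : x ∉ mclosure1 F) :
    (fun y => (volume (Set.uIoc x y ∩ F)).toReal) =o[𝓝 x] fun y => y - x := by
  rw [Asymptotics.isLittleO_iff]
  intro c hc
  have h := tendsto_of_notMem hx
  have hev : ∀ᶠ r in 𝓝[>] (0:ℝ),
      volume (Ioo (x - r) (x + r) ∩ F) / ENNReal.ofReal r < ENNReal.ofReal (c / 2) :=
    h.eventually_lt_const (ENNReal.ofReal_pos.2 (by linarith))
  rw [eventually_nhdsWithin_iff, Metric.eventually_nhds_iff] at hev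
  obtain ⟨δ, hδ, hδ'⟩ := hev
  filter_upwards [Metric.ball_mem_nhds x (by linarith : (0:ℝ) < δ / 2)] with y hy
  rcases eq_or_ne y x with rfl | hxy
  · simp
  · have habs : 0 < |y - x| := abs_pos.2 (sub_ne_zero.2 hxy)
    set r : ℝ := 2 * |y - x| with hr
    have hrpos : 0 < r := by positivity
    have hdy : |y - x| < δ / 2 := by simpa [Real.dist_eq] using hy
    have hrδ : dist r 0 < δ := by
      rw [Real.dist_eq, sub_zero, abs_of_pos hrpos]; linarith
    have hkey := hδ' hrδ hrpos
    have hsub : Set.uIoc x y ∩ F ⊆ Ioo (x - r) (x + r) ∩ F := by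
      refine inter_subset_inter_left _ ?_
      intro z hz
      obtain ⟨h1, h2⟩ := hz
      have hmin : x - |y - x| ≤ x ⊓ y :=
        le_inf (by linarith [abs_nonneg (y - x)]) (by linarith [neg_abs_le (y - x)])
      have hmax : x ⊔ y ≤ x + |y - x| :=
        sup_le (by linarith [abs_nonneg (y - x)]) (by linarith [le_abs_self (y - x)])
      constructor
      · have h3 : x - r < x - |y - x| := by rw [hr]; linarith
        linarith [lt_of_le_of_lt hmin h1, h3]
      · have h4 : x + |y - x| < x + r := by rw [hr]; linarith
        linarith [le_trans h2 hmax]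
    have hA : volume (Set.uIoc x y ∩ F) < ENNReal.ofReal (c / 2) * ENNReal.ofReal r := by
      refine (measure_mono hsub).trans_lt ?_
      rwa [ENNReal.div_lt_iff (Or.inl (ENNReal.ofReal_pos.2 hrpos).ne')
        (Or.inl ENNReal.ofReal_ne_top)] at hkey
    have hB : volume (Set.uIoc x y ∩ F) ≤ ENNReal.ofReal (c * |y - x|) := by
      refine hA.le.trans (le_of_eq ?_)
      rw [← ENNReal.ofReal_mul (by linarith : (0:ℝ) ≤ c / 2)]
      congr 1
      rw [hr]; ring
    have hC : (volume (Set.uIoc x y ∩ F)).toReal ≤ c * |y - x| := by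
      refine (ENNReal.toReal_mono ENNReal.ofReal_ne_top hB).trans (le_of_eq ?_)
      exact ENNReal.toReal_ofReal (by positivity)
    rw [Real.norm_eq_abs, Real.norm_eq_abs, abs_of_nonneg ENNReal.toReal_nonneg]
    exact hC

lemma vol_ne_top (E : Set ℝ) (u v : ℝ) : volume (Ioc u v ∩ E) ≠ ⊤ :=
  ((measure_mono inter_subset_left).trans_lt measure_Ioc_lt_top).ne

lemma vol_split {E : Set ℝ} (hE : MeasurableSet E) {u v w : ℝ} (huv : u ≤ v) (hvw : v ≤ w) :
    (volume (Ioc u w ∩ E)).toReal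
      = (volume (Ioc u v ∩ E)).toReal + (volume (Ioc v w ∩ E)).toReal := by
  have h : Ioc u w ∩ E = (Ioc u v ∩ E) ∪ (Ioc v w ∩ E) := by
    rw [← union_inter_distrib_right, Set.Ioc_union_Ioc_eq_Ioc huv hvw]
  rw [h, measure_union ((Set.Ioc_disjoint_Ioc_of_le le_rfl).mono inter_subset_left inter_subset_left)
    (measurableSet_Ioc.inter hE), ENNReal.toReal_add (vol_ne_top E u v) (vol_ne_top E v w)]

lemma vol_compl_split {E : Set ℝ} (hE : MeasurableSet E) {u v : ℝ} (huv : u ≤ v) :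
    (volume (Ioc u v ∩ E)).toReal + (volume (Ioc u v ∩ Eᶜ)).toReal = v - u := by
  rw [← ENNReal.toReal_add (vol_ne_top E u v) (vol_ne_top Eᶜ u v), ← Set.diff_eq,
    measure_inter_add_diff _ hE, Real.volume_Ioc, ENNReal.toReal_ofReal (by linarith)]

lemma hasDeriv_zero {E : Set ℝ} (hE : MeasurableSet E) {a b x : ℝ} (hx : x ∈ Icc a b)
    (hcl : x ∉ mclosure1 E) :
    HasDerivWithinAt (fun y => (volume (Ioc a y ∩ E)).toReal) 0 (Icc a b) x := by
  rw [hasDerivWithinAt_iff_isLittleO]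
  have hsmall : (fun y => ‖(volume (Set.uIoc x y ∩ E)).toReal‖) =o[𝓝[Icc a b] x]
      fun y => y - x :=
    ((uIoc_small hcl).mono nhdsWithin_le_nhds).norm_left
  rw [← Asymptotics.isLittleO_norm_left]
  refine hsmall.congr' ?_ EventuallyEq.rfl
  filter_upwards [self_mem_nhdsWithin] with y hy
  simp only [smul_zero, sub_zero]
  rcases le_total x y with h | h
  · rw [Set.uIoc_of_le h]
    rw [vol_split hE hx.1 h]
    ring_nf
  · rw [Set.uIoc_of_ge h]
    rw [vol_split hE hy.1 h]
    rw [show (volume (Ioc a y ∩ E)).toReal -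
      ((volume (Ioc a y ∩ E)).toReal + (volume (Ioc y x ∩ E)).toReal)
      = -(volume (Ioc y x ∩ E)).toReal by ring, norm_neg]

lemma hasDeriv_one {E : Set ℝ} (hE : MeasurableSet E) {a b x : ℝ} (hx : x ∈ Icc a b)
    (hcl : x ∉ mclosure1 Eᶜ) :
    HasDerivWithinAt (fun y => (volume (Ioc a y ∩ E)).toReal) 1 (Icc a b) x := by
  rw [hasDerivWithinAt_iff_isLittleO]
  have hsmall : (fun y => ‖(volume (Set.uIoc x y ∩ Eᶜ)).toReal‖) =o[𝓝[Icc a b] x]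
      fun y => y - x :=
    ((uIoc_small hcl).mono nhdsWithin_le_nhds).norm_left
  rw [← Asymptotics.isLittleO_norm_left]
  refine hsmall.congr' ?_ EventuallyEq.rfl
  filter_upwards [self_mem_nhdsWithin] with y hy
  simp only [smul_eq_mul, mul_one]
  rcases le_total x y with h | h
  · rw [Set.uIoc_of_le h, vol_split hE hx.1 h]
    have := vol_compl_split hE h
    rw [show (volume (Ioc a x ∩ E)).toReal + (volume (Ioc x y ∩ E)).toReal -
      (volume (Ioc a x ∩ E)).toReal - (y - x) = -(volume (Ioc x y ∩ Eᶜ)).toReal by linarith,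
      norm_neg]
  · rw [Set.uIoc_of_ge h, vol_split hE hy.1 h]
    have := vol_compl_split hE h
    congr 1
    linarith

lemma key_lemma {E : Set ℝ} (hE : MeasurableSet E) {a b : ℝ} (hab : a < b)
    (hB : ∀ x ∈ Icc a b, ¬(x ∈ mclosure1 E ∧ x ∈ mclosure1 Eᶜ))
    (ha : a ∉ mclosure1 E) (hb : b ∉ mclosure1 Eᶜ) : False := by
  classical
  set f' : ℝ → ℝ := fun x => if x ∈ mclosure1 Eᶜ then 0 else 1 with hf'
  have hderiv : ∀ x ∈ Icc a b,
      HasDerivWithinAt (fun y => (volume (Ioc a y ∩ E)).toReal) (f' x) (Icc a b) x := by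
    intro x hx
    by_cases hc : x ∈ mclosure1 Eᶜ
    · have hnotE : x ∉ mclosure1 E := fun hcE => hB x hx ⟨hcE, hc⟩
      simpa [hf', hc] using hasDeriv_zero hE hx hnotE
    · simpa [hf', hc] using hasDeriv_one hE hx hc
  have hfa : f' a = 0 := by
    have : a ∈ mclosure1 Eᶜ := (mem_closure_or hE a).resolve_left ha
    simp [hf', this]
  have hfb : f' b = 1 := by simp [hf', hb]
  obtain ⟨c, -, hc⟩ := exists_hasDerivWithinAt_eq_of_gt_of_lt hab.le hderiv
    (m := 1/2) (by rw [hfa]; norm_num) (by rw [hfb]; norm_num)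
  simp only [hf'] at hc
  split_ifs at hc <;> norm_num at hc

theorem between_boundary (I : Set ℝ) (hI : I.OrdConnected)
    (E : Set ℝ) (hE : MeasurableSet E) :
    I ∩ mboundary1 E = ∅ ↔ (I ⊆ minterior1 E ∨ I ⊆ minterior1 Eᶜ) := by
  constructor
  · intro h
    by_contra hcon
    push_neg at hcon
    obtain ⟨⟨a, haI, ha⟩, ⟨b, hbI, hb⟩⟩ :
        (∃ a ∈ I, a ∉ minterior1 E) ∧ (∃ b ∈ I, b ∉ minterior1 Eᶜ) := by
      obtain ⟨h1, h2⟩ := hcon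
      exact ⟨not_subset.1 h1, not_subset.1 h2⟩
    have ha' : a ∈ mclosure1 Eᶜ := by simpa [minterior1] using ha
    have hb' : b ∈ mclosure1 E := by
      simp only [minterior1, compl_compl, not_not, mem_compl_iff] at hb
      exact hb
    have hdisj : ∀ x ∈ I, ¬(x ∈ mclosure1 E ∧ x ∈ mclosure1 Eᶜ) := by
      intro x hx hc
      exact absurd h (by
        rw [eq_empty_iff_forall_notMem] at h ⊢
        exact fun _ => h x ⟨hx, hc.1, hc.2⟩)
    have haE : a ∉ mclosure1 E := fun hc => hdisj a haI ⟨hc, ha'⟩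
    have hbc : b ∉ mclosure1 Eᶜ := fun hc => hdisj b hbI ⟨hb', hc⟩
    rcases lt_trichotomy a b with hab | hab | hab
    · exact key_lemma hE hab
        (fun x hx => hdisj x (hI.out haI hbI hx)) haE hbc
    · exact haE (hab ▸ hb')
    · refine key_lemma hE.compl hab (E := Eᶜ) ?_ hbc ?_
      · intro x hx hc
        rw [compl_compl] at hc
        exact hdisj x (hI.out hbI haI hx) ⟨hc.2, hc.1⟩
      · rw [compl_compl]
        exact haE
  · rintro (hsub | hsub) <;>
    · rw [eq_empty_iff_forall_notMem]
      rintro x ⟨hxI, hx1, hx2⟩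
      have := hsub hxI
      simp only [minterior1, mem_compl_iff, compl_compl] at this
      exact this (by first | exact hx2 | exact hx1)
end

section
/- There exists a natural number C depending only on the dimension d such that the following holds. Let 𝓑 be a set of balls in ℝ^d with sup{diam(B) : B ∈ 𝓑} < ∞. Then there exist subcollections 𝓢₁, …, 𝓢_C ⊆ 𝓑, each consisting of pairwise disjoint balls, such that for every ball B(x,r) ∈ 𝓑 there exists a ball B(y,s) ∈ 𝓢₁ ∪ ⋯ ∪ 𝓢_C with x ∈ B(y,s) and r ≤ (8/7)·s. -/
open MeasureTheory Metric Set Filter Topology ENNReal NNReal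

open MeasureTheory Metric Set Filter Topology ENNReal NNReal

universe u

open Besicovitch in
theorem exist_disjoint_covering_families' {α : Type*} [MetricSpace α] {β : Type u} {N : ℕ}
    {τ : ℝ} (hτ : 1 < τ) (hN : IsEmpty (SatelliteConfig α N τ)) (q : BallPackage β α) :
    ∃ s : Fin N → Set β,
      (∀ i : Fin N, (s i).PairwiseDisjoint fun j => closedBall (q.c j) (q.r j)) ∧
        ∀ b : β, ∃ i, ∃ j ∈ s i, q.c b ∈ ball (q.c j) (q.r j) ∧ q.r b ≤ τ * q.r j := by
  classical
  cases isEmpty_or_nonempty β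
  · exact ⟨fun _ => ∅, fun _ => pairwiseDisjoint_empty, fun b => (IsEmpty.false b).elim⟩
  let p : TauPackage β α := { q with τ := τ, one_lt_tau := hτ }
  let s := fun i : Fin N =>
    ⋃ (k : Ordinal.{u}) (_ : k < p.lastStep) (_ : p.color k = i), ({p.index k} : Set β)
  refine ⟨s, fun i => ?_, ?_⟩
  · -- disjointness: verbatim from mathlib
    intro x hx y hy x_ne_y
    obtain ⟨jx, jx_lt, jxi, rfl⟩ :
      ∃ jx : Ordinal, jx < p.lastStep ∧ p.color jx = i ∧ x = p.index jx := by
      simpa only [s, exists_prop, mem_iUnion, mem_singleton_iff] using hx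
    obtain ⟨jy, jy_lt, jyi, rfl⟩ :
      ∃ jy : Ordinal, jy < p.lastStep ∧ p.color jy = i ∧ y = p.index jy := by
      simpa only [s, exists_prop, mem_iUnion, mem_singleton_iff] using hy
    wlog jxy : jx ≤ jy generalizing jx jy
    · exact (this jy jy_lt jyi hy jx jx_lt jxi hx x_ne_y.symm (le_of_not_ge jxy)).symm
    replace jxy : jx < jy := by
      rcases lt_or_eq_of_le jxy with (H | rfl); · { exact H }; · { exact (x_ne_y rfl).elim }
    let A : Set ℕ :=
      ⋃ (j : { j // j < jy })
        (_ : (closedBall (p.c (p.index j)) (p.r (p.index j)) ∩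
          closedBall (p.c (p.index jy)) (p.r (p.index jy))).Nonempty),
        {p.color j}
    have color_j : p.color jy = sInf (univ \ A) := by rw [Besicovitch.TauPackage.color]
    have h : p.color jy ∈ univ \ A := by
      rw [color_j]
      apply csInf_mem
      refine ⟨N, ?_⟩
      simp only [A, not_exists, true_and, exists_prop, mem_iUnion, mem_singleton_iff, not_and,
        mem_univ, mem_diff, Subtype.exists, Subtype.coe_mk]
      intro k hk _
      exact (p.color_lt (hk.trans jy_lt) hN).ne'
    simp only [A, not_exists, true_and, exists_prop, mem_iUnion, mem_singleton_iff, not_and,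
      mem_univ, mem_diff, Subtype.exists, Subtype.coe_mk] at h
    specialize h jx jxy
    contrapose! h
    simpa only [jxi, jyi, and_true, eq_self_iff_true, ← not_disjoint_iff_nonempty_inter] using h
  · intro b
    let T : Set Ordinal.{u} :=
      {j | j < p.lastStep ∧ q.c b ∈ ball (q.c (p.index j)) (q.r (p.index j))}
    have hT : T.Nonempty := by
      have := p.mem_iUnionUpTo_lastStep b
      simp only [Besicovitch.TauPackage.iUnionUpTo, mem_iUnion, Subtype.exists] at this
      obtain ⟨j, hj, hjb⟩ := this
      exact ⟨j, hj, hjb⟩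
    set a := sInf T with ha
    have haT : a ∈ T := csInf_mem hT
    have hcov : p.c b ∉ p.iUnionUpTo a := by
      intro h
      simp only [Besicovitch.TauPackage.iUnionUpTo, mem_iUnion, Subtype.exists] at h
      obtain ⟨j, hj, hjb⟩ := h
      have hjT : j ∈ T := ⟨hj.trans haT.1, hjb⟩
      exact absurd (csInf_le (OrderBot.bddBelow T) hjT) (not_le.2 hj)
    have hex : ∃ t, p.c t ∉ p.iUnionUpTo a ∧ p.R a ≤ p.τ * p.r t := by
      simpa only [not_exists, exists_prop, not_and, not_lt, not_le, mem_setOf_eq,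
        not_forall] using notMem_of_lt_csInf haT.1 (OrderBot.bddBelow _)
    have hind : p.c (p.index a) ∉ p.iUnionUpTo a ∧ p.R a ≤ p.τ * p.r (p.index a) := by
      have h' : p.index a =
          Classical.epsilon fun t => p.c t ∉ p.iUnionUpTo a ∧ p.R a ≤ p.τ * p.r t := by
        rw [Besicovitch.TauPackage.index]; rfl
      rw [h']; exact Classical.epsilon_spec hex
    have hrb : p.r b ≤ p.R a := by
      refine le_ciSup_of_le ?_ (⟨b, hcov⟩ : {t // p.c t ∉ p.iUnionUpTo a}) le_rfl
      refine ⟨p.r_bound, fun t ht => ?_⟩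
      obtain ⟨u, rfl⟩ := ht
      exact p.r_le _
    refine ⟨⟨p.color a, p.color_lt haT.1 hN⟩, p.index a, ?_, haT.2, hrb.trans hind.2⟩
    simp only [s, mem_iUnion, mem_singleton_iff]
    exact ⟨a, haT.1, rfl, rfl⟩
open MeasureTheory Metric Set Filter Topology ENNReal NNReal

theorem satconfig_mono' {α : Type*} [MetricSpace α] {N : ℕ} {τ τ' : ℝ} (h : τ' ≤ τ)
    (hN : IsEmpty (Besicovitch.SatelliteConfig α N τ)) :
    IsEmpty (Besicovitch.SatelliteConfig α N τ') := by
  constructor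
  intro sc
  exact hN.false
    { c := sc.c, r := sc.r, rpos := sc.rpos
      h := fun i j hij => by
        rcases sc.h hij with ⟨h1, h2⟩ | ⟨h1, h2⟩
        · exact Or.inl ⟨h1, h2.trans (mul_le_mul_of_nonneg_right h (sc.rpos i).le)⟩
        · exact Or.inr ⟨h1, h2.trans (mul_le_mul_of_nonneg_right h (sc.rpos j).le)⟩
      hlast := fun i hi => ⟨(sc.hlast i hi).1,
        (sc.hlast i hi).2.trans (mul_le_mul_of_nonneg_right h (sc.rpos i).le)⟩
      inter := sc.inter }

theorem besicovitch_main (d : ℕ) [Nontrivial (EuclideanSpace ℝ (Fin d))] :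
    ∃ C : ℕ, 0 < C ∧
      ∀ 𝓑 : Set (Set (EuclideanSpace ℝ (Fin d))),
        (∀ B ∈ 𝓑, ∃ (x : EuclideanSpace ℝ (Fin d)) (r : ℝ), 0 < r ∧
          (B = ball x r ∨ B = closedBall x r)) →
        (∃ M : ℝ, ∀ B ∈ 𝓑, Metric.diam B ≤ M) →
        ∃ 𝓢 : Fin C → Set (Set (EuclideanSpace ℝ (Fin d))),
          (∀ i, 𝓢 i ⊆ 𝓑 ∧ (𝓢 i).Pairwise Disjoint) ∧
          ∀ B ∈ 𝓑, ∀ (x : EuclideanSpace ℝ (Fin d)) (r : ℝ), 0 < r →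
            (B = ball x r ∨ B = closedBall x r) →
            ∃ i, ∃ S ∈ 𝓢 i, ∃ (y : EuclideanSpace ℝ (Fin d)) (s : ℝ), 0 < s ∧
              (S = ball y s ∨ S = closedBall y s) ∧ x ∈ S ∧ r ≤ (8 / 7) * s := by
  classical
  set E := EuclideanSpace ℝ (Fin d) with hEdef
  set N := Besicovitch.multiplicity E with hNdef
  set τ := min (8 / 7 : ℝ) (Besicovitch.goodτ E) with hτdef
  have hτ : 1 < τ := lt_min (by norm_num) (Besicovitch.one_lt_goodτ E)
  have hN : IsEmpty (Besicovitch.SatelliteConfig E N τ) :=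
    satconfig_mono' (min_le_right _ _) (Besicovitch.isEmpty_satelliteConfig_multiplicity E)
  refine ⟨N + 1, Nat.succ_pos _, fun 𝓑 h𝓑 hM => ?_⟩
  obtain ⟨M, hMb⟩ := hM
  -- bound on radii
  have rad_le : ∀ (x : E) (r : ℝ), 0 < r → Metric.diam (ball x r) ≤ M → r ≤ M / 2 := by
    intro x r hr hdiam
    by_contra hcon
    push_neg at hcon
    have hM0 : 0 ≤ M := le_trans Metric.diam_nonneg hdiam
    set c := (M / 2 + r) / 2 with hc
    have hc0 : 0 ≤ c := by positivity
    have hcr : c < r := by rw [hc]; linarith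
    have hMc : M < 2 * c := by rw [hc]; linarith
    obtain ⟨v, hv⟩ := exists_norm_eq E hc0
    have h1 : x + v ∈ ball x r := by
      rw [mem_ball, show dist (x + v) x = ‖(x + v) - x‖ from dist_eq_norm _ _]
      simp only [add_sub_cancel_left, hv]; exact hcr
    have h2 : x - v ∈ ball x r := by
      rw [mem_ball, show dist (x - v) x = ‖(x - v) - x‖ from dist_eq_norm _ _]
      simp only [sub_sub_cancel_left, norm_neg, hv]; exact hcr
    have hd : dist (x + v) (x - v) = 2 * c := by
      rw [show dist (x + v) (x - v) = ‖(x + v) - (x - v)‖ from dist_eq_norm _ _]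
      have h3 : (x + v) - (x - v) = (2 : ℝ) • v := by module
      rw [h3, norm_smul, hv]; norm_num
    have := Metric.dist_le_diam_of_mem isBounded_ball h1 h2
    rw [hd] at this
    linarith [this.trans hdiam]
  -- index type
  let β := {q : Set E × E × ℝ // q.1 ∈ 𝓑 ∧ 0 < q.2.2 ∧
      (q.1 = ball q.2.1 q.2.2 ∨ q.1 = closedBall q.2.1 q.2.2)}
  have ball_sub : ∀ b : β, ball b.1.2.1 b.1.2.2 ⊆ b.1.1 := by
    rintro b z hz
    rcases b.2.2.2 with h | h
    · rw [h]; exact hz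
    · rw [h]; exact ball_subset_closedBall hz
  have sub_cball : ∀ b : β, b.1.1 ⊆ closedBall b.1.2.1 b.1.2.2 := by
    rintro b z hz
    rcases b.2.2.2 with h | h
    · exact ball_subset_closedBall (h ▸ hz)
    · exact h ▸ hz
  have rbound : ∀ b : β, b.1.2.2 ≤ M / 2 := by
    intro b
    apply rad_le _ _ b.2.2.1
    refine le_trans (Metric.diam_mono (ball_sub b) ?_) (hMb _ b.2.1)
    rcases b.2.2.2 with h | h
    · rw [h]; exact isBounded_ball
    · rw [h]; exact isBounded_closedBall
  let pkg : Besicovitch.BallPackage β E :=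
    { c := fun b => b.1.2.1, r := fun b => b.1.2.2,
      rpos := fun b => b.2.2.1, r_bound := M / 2, r_le := rbound }
  obtain ⟨s, hdisj, hcov⟩ := exist_disjoint_covering_families' hτ hN pkg
  refine ⟨fun i => if h : (i : ℕ) < N then (fun b : β => b.1.1) '' s ⟨i, h⟩ else ∅,
    fun i => ?_, ?_⟩
  · by_cases h : (i : ℕ) < N
    · dsimp only
      rw [dif_pos h]
      constructor
      · rintro _ ⟨b, _, rfl⟩; exact b.2.1
      · rintro _ ⟨b, hb, rfl⟩ _ ⟨b', hb', rfl⟩ hne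
        have hbb' : b ≠ b' := fun hE => hne (by rw [hE])
        exact Disjoint.mono (sub_cball b) (sub_cball b') (hdisj ⟨i, h⟩ hb hb' hbb')
    · dsimp only
      rw [dif_neg h]
      exact ⟨empty_subset _, pairwise_empty _⟩
  · intro B hB x r hr hrep
    let b : β := ⟨(B, x, r), hB, hr, hrep⟩
    obtain ⟨i, j, hj, hmem, hle⟩ := hcov b
    refine ⟨⟨(i : ℕ), (i.2.trans (Nat.lt_succ_self N))⟩, j.1.1, ?_, j.1.2.1, j.1.2.2,
      j.2.2.1, j.2.2.2, ?_, ?_⟩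
    · have : ((⟨(i : ℕ), (i.2.trans (Nat.lt_succ_self N))⟩ : Fin (N + 1)) : ℕ) < N := i.2
      dsimp only
      rw [dif_pos this]
      exact ⟨j, by convert hj, rfl⟩
    · exact ball_sub j hmem
    · calc r ≤ τ * j.1.2.2 := hle
        _ ≤ (8 / 7) * j.1.2.2 :=
          mul_le_mul_of_nonneg_right (min_le_left _ _) j.2.2.1.le
theorem besicovitch_with_extra (d : ℕ) :
    ∃ C : ℕ, 0 < C ∧
      ∀ 𝓑 : Set (Set (EuclideanSpace ℝ (Fin d))),
        (∀ B ∈ 𝓑, IsBall d B) →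
        (∃ M : ℝ, ∀ B ∈ 𝓑, Metric.diam B ≤ M) →
        ∃ 𝓢 : Fin C → Set (Set (EuclideanSpace ℝ (Fin d))),
          (∀ i, 𝓢 i ⊆ 𝓑 ∧ (𝓢 i).Pairwise Disjoint) ∧
          ∀ B ∈ 𝓑, ∀ (x : EuclideanSpace ℝ (Fin d)) (r : ℝ), 0 < r →
            (B = ball x r ∨ B = closedBall x r) →
            ∃ i, ∃ S ∈ 𝓢 i, ∃ (y : EuclideanSpace ℝ (Fin d)) (s : ℝ), 0 < s ∧
              (S = ball y s ∨ S = closedBall y s) ∧ x ∈ S ∧ r ≤ (8 / 7) * s := by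
  classical
  rcases subsingleton_or_nontrivial (EuclideanSpace ℝ (Fin d)) with hE | hE
  · -- subsingleton case: every ball is `univ`
    refine ⟨1, one_pos, fun 𝓑 h𝓑 _ => ?_⟩
    have key : ∀ (y : EuclideanSpace ℝ (Fin d)) (s : ℝ), 0 < s →
        ball y s = univ ∧ closedBall y s = univ := by
      intro y s hs
      constructor <;>
        · apply eq_univ_iff_forall.2
          intro z
          simp [Subsingleton.elim z y, hs, hs.le]
    rcases eq_empty_or_nonempty 𝓑 with rfl | ⟨B₀, hB₀⟩
    · exact ⟨fun _ => ∅, fun _ => ⟨empty_subset _, pairwise_empty _⟩,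
        fun B hB => absurd hB (notMem_empty B)⟩
    · refine ⟨fun _ => {B₀}, fun _ => ⟨singleton_subset_iff.2 hB₀, pairwise_singleton _ _⟩, ?_⟩
      intro B hB x r hr _
      obtain ⟨y₀, s₀, hs₀, hrep₀⟩ := h𝓑 B₀ hB₀
      have hB₀univ : B₀ = univ := by
        rcases hrep₀ with h | h
        · rw [h, (key y₀ s₀ hs₀).1]
        · rw [h, (key y₀ s₀ hs₀).2]
      refine ⟨0, B₀, rfl, x, r, hr, Or.inr ?_, ?_, by linarith⟩
      · rw [hB₀univ, (key x r hr).2]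
      · rw [hB₀univ]; trivial
  · obtain ⟨C, hC, H⟩ := besicovitch_main d
    exact ⟨C, hC, fun 𝓑 h𝓑 hM => H 𝓑 (fun B hB => h𝓑 B hB) hM⟩
end

section
/- Let x₀, x₁ ∈ ℝ^d and 7/8 ≤ r₀ ≤ r₁ be such that |x₁ − x₀| ≥ r₁ − r₀/7, such that 0 ≤ |x_i| − r_i < 1 for i = 0, 1, and such that (|x₀| − 3/2)·(|x₁| − 3/2) ≥ 0. Then the angle between the vectors x₀ and x₁ is at least arctan(1/7). -/
open Set

lemma key (a b r₀ r₁ : ℝ) (hr₀ : 7/8 ≤ r₀) (hr₀₁ : r₀ ≤ r₁)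
    (h₀ : r₀ ≤ a) (h₀' : a < r₀ + 1) (h₁ : r₁ ≤ b) (h₁' : b < r₁ + 1)
    (hsign : 0 ≤ (a - 3/2) * (b - 3/2)) :
    a^2 + b^2 - (r₁ - r₀/7)^2 ≤ 2 * (9899/10000) * (a*b) := by
  rcases le_or_gt a (3/2) with hA | hA
  · rcases le_or_gt b (3/2) with hB | hB
    · nlinarith [mul_nonneg (by linarith : (0:ℝ) ≤ 3/2 - a) (by linarith : (0:ℝ) ≤ a - r₀),
        mul_nonneg (by linarith : (0:ℝ) ≤ 3/2 - b) (by linarith : (0:ℝ) ≤ b - r₁),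
        mul_nonneg (by linarith : (0:ℝ) ≤ r₁ - r₀) (by linarith : (0:ℝ) ≤ b - a + 1),
        sq_nonneg (a - b), sq_nonneg (r₁ - r₀), mul_pos (by linarith : (0:ℝ) < r₀) (by linarith : (0:ℝ) < r₁)]
    · have haeq : a = 3/2 := by nlinarith
      subst haeq
      nlinarith [mul_nonneg (by linarith : (0:ℝ) ≤ b - r₁) (by linarith : (0:ℝ) ≤ r₁ + 1 - b),
        mul_nonneg (by linarith : (0:ℝ) ≤ r₁ - r₀) (by linarith : (0:ℝ) ≤ b),
        sq_nonneg (r₁ - r₀), sq_nonneg (b - 15/8)]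
  · have hB : (3:ℝ)/2 ≤ b := by nlinarith
    nlinarith [mul_nonneg (by linarith : (0:ℝ) ≤ a - 3/2) (by linarith : (0:ℝ) ≤ r₀ + 1 - a),
      mul_nonneg (by linarith : (0:ℝ) ≤ b - 3/2) (by linarith : (0:ℝ) ≤ r₁ + 1 - b),
      mul_nonneg (by linarith : (0:ℝ) ≤ r₁ - r₀) (by linarith : (0:ℝ) ≤ b - a + 1),
      sq_nonneg (a - b), mul_nonneg (by linarith : (0:ℝ) ≤ a - r₀) (by linarith : (0:ℝ) ≤ r₁ + 1 - b)]

theorem min_angle (d : ℕ) (x₀ x₁ : EuclideanSpace ℝ (Fin d)) (r₀ r₁ : ℝ)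
    (hr₀ : 7 / 8 ≤ r₀) (hr₀₁ : r₀ ≤ r₁)
    (hdist : r₁ - r₀ / 7 ≤ ‖x₁ - x₀‖)
    (h₀ : 0 ≤ ‖x₀‖ - r₀) (h₀' : ‖x₀‖ - r₀ < 1)
    (h₁ : 0 ≤ ‖x₁‖ - r₁) (h₁' : ‖x₁‖ - r₁ < 1)
    (hsign : 0 ≤ (‖x₀‖ - 3 / 2) * (‖x₁‖ - 3 / 2)) :
    Real.arctan (1 / 7) ≤ InnerProductGeometry.angle x₀ x₁ := by
  set a := ‖x₀‖ with ha
  set b := ‖x₁‖ with hb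
  have ha0 : (0:ℝ) < a := by linarith
  have hb0 : (0:ℝ) < b := by linarith
  have hab : (0:ℝ) < a * b := mul_pos ha0 hb0
  have hpol := norm_sub_sq_real x₁ x₀
  have hDpos : (0:ℝ) ≤ r₁ - r₀/7 := by linarith
  have hDsq : (r₁ - r₀/7)^2 ≤ ‖x₁ - x₀‖^2 := pow_le_pow_left₀ hDpos hdist 2
  have hinner : (inner ℝ x₀ x₁ : ℝ) ≤ (9899/10000) * (a * b) := by
    have hcomm : (inner ℝ x₁ x₀ : ℝ) = (inner ℝ x₀ x₁ : ℝ) := real_inner_comm _ _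
    have hk := key a b r₀ r₁ hr₀ hr₀₁ (by linarith) (by linarith) (by linarith) (by linarith) hsign
    rw [hcomm] at hpol
    nlinarith [hpol, hDsq]
  rw [InnerProductGeometry.angle]
  have hquot : (inner ℝ x₀ x₁ : ℝ) / (a * b) ≤ 9899/10000 := by
    rw [div_le_iff₀ hab]; linarith
  have hs : Real.sqrt (1 + (1/7:ℝ)^2) ≤ 10000/9899 :=
    Real.sqrt_le_iff.mpr ⟨by norm_num, by norm_num⟩
  have hspos : (0:ℝ) < Real.sqrt (1 + (1/7:ℝ)^2) := Real.sqrt_pos.mpr (by norm_num)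
  have hq : (9899/10000 : ℝ) ≤ 1 / Real.sqrt (1 + (1/7:ℝ)^2) := by
    rw [le_div_iff₀ hspos]
    nlinarith
  have harctan : Real.arctan (1/7) = Real.arccos (1 / Real.sqrt (1 + (1/7:ℝ)^2)) := by
    rw [← Real.cos_arctan, Real.arccos_cos]
    · rw [← Real.arctan_zero]; exact (Real.arctan_strictMono.le_iff_le.mpr (by norm_num))
    · linarith [Real.arctan_lt_pi_div_two (1/7 : ℝ), Real.pi_pos]
  rw [harctan, Real.arccos, Real.arccos]
  have := Real.monotone_arcsin (le_trans hquot hq)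
  linarith
end

section
/- There exists a natural number N depending only on the dimension d such that the following holds. Let B(x,r) ⊆ ℝ^d be a ball and let B₁ = B(x₁,r₁), …, B_n = B(x_n,r_n) be balls such that for every i one has r_i ≥ (7/8)·r, B(x,r) ∩ B_i ≠ ∅, and x ∉ B_i, and such that for all i < j one has r_j ≤ (8/7)·r_i and x_j ∉ B_i. Then n ≤ N − 1. -/
open Set Metric Besicovitch Fin

section aux

variable {E : Type*} [NormedAddCommGroup E] [NormedSpace ℝ E] [FiniteDimensional ℝ E]

theorem my_card_le_of_separated (s : Finset E) (hs : ∀ c ∈ s, ‖c‖ ≤ 2)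
    (h : ∀ c ∈ s, ∀ d ∈ s, c ≠ d → 3 / 7 ≤ ‖c - d‖) : s.card ≤ 11 ^ (Module.finrank ℝ E) := by
  borelize E
  let μ : MeasureTheory.Measure E := MeasureTheory.Measure.addHaar
  let δ : ℝ := (3 : ℝ) / 14
  let ρ : ℝ := 2 + 3 / 14
  have ρpos : 0 < ρ := by norm_num
  set A := ⋃ c ∈ s, ball (c : E) δ with hA
  have D : Set.Pairwise (s : Set E) (Function.onFun Disjoint fun c => ball (c : E) δ) := by
    rintro c hc d hd hcd
    apply ball_disjoint_ball
    rw [dist_eq_norm]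
    have := h c hc d hd hcd
    simp only [δ]
    linarith
  have A_subset : A ⊆ ball (0 : E) ρ := by
    refine iUnion₂_subset fun x hx => ?_
    apply ball_subset_ball'
    calc
      δ + dist x 0 ≤ δ + 2 := by rw [dist_zero_right]; exact add_le_add le_rfl (hs x hx)
      _ = ρ := by norm_num [δ, ρ]
  have I :
    (s.card : ENNReal) * ENNReal.ofReal (δ ^ Module.finrank ℝ E) * μ (ball 0 1) ≤
      ENNReal.ofReal (ρ ^ Module.finrank ℝ E) * μ (ball 0 1) :=
    calc
      (s.card : ENNReal) * ENNReal.ofReal (δ ^ Module.finrank ℝ E) * μ (ball 0 1) = μ A := by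
        rw [hA, MeasureTheory.measure_biUnion_finset D fun c _ => measurableSet_ball]
        have I : 0 < δ := by norm_num
        simp only [μ.addHaar_ball_of_pos _ I]
        simp only [Finset.sum_const, nsmul_eq_mul, mul_assoc]
      _ ≤ μ (ball (0 : E) ρ) := MeasureTheory.measure_mono A_subset
      _ = ENNReal.ofReal (ρ ^ Module.finrank ℝ E) * μ (ball 0 1) := by
        simp only [μ.addHaar_ball_of_pos _ ρpos]
  have J : (s.card : ENNReal) * ENNReal.ofReal (δ ^ Module.finrank ℝ E) ≤
      ENNReal.ofReal (ρ ^ Module.finrank ℝ E) :=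
    (ENNReal.mul_le_mul_iff_left (Metric.measure_ball_pos μ (0:E) zero_lt_one).ne'
      MeasureTheory.measure_ball_lt_top.ne).1 I
  have K : (s.card : ℝ) ≤ (11 : ℝ) ^ Module.finrank ℝ E := by
    have := ENNReal.toReal_le_of_le_ofReal (pow_nonneg ρpos.le _) J
    rw [ENNReal.toReal_mul, ENNReal.toReal_natCast,
      ENNReal.toReal_ofReal (by positivity : (0:ℝ) ≤ δ ^ Module.finrank ℝ E)] at this
    have hδpow : (0:ℝ) < δ ^ Module.finrank ℝ E := by positivity
    have h2 : (s.card : ℝ) ≤ (ρ / δ) ^ Module.finrank ℝ E := by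
      rw [div_pow]
      rw [le_div_iff₀ hδpow]
      exact this
    refine h2.trans ?_
    apply pow_le_pow_left₀ (by positivity)
    norm_num [ρ, δ]
  exact_mod_cast K

end aux

theorem intersecting_balls_bound (d : ℕ) :
    ∃ N : ℕ, 0 < N ∧
      ∀ (n : ℕ) (x : EuclideanSpace ℝ (Fin d)) (r : ℝ) (B : Set (EuclideanSpace ℝ (Fin d))),
        0 < r → (B = ball x r ∨ B = closedBall x r) →
        ∀ (xs : Fin n → EuclideanSpace ℝ (Fin d)) (rs : Fin n → ℝ)
          (Bs : Fin n → Set (EuclideanSpace ℝ (Fin d))),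
          (∀ i, 0 < rs i ∧ (Bs i = ball (xs i) (rs i) ∨ Bs i = closedBall (xs i) (rs i))) →
          (∀ i, (7 / 8) * r ≤ rs i ∧ (B ∩ Bs i).Nonempty ∧ x ∉ Bs i) →
          (∀ i j : Fin n, i < j → rs j ≤ (8 / 7) * rs i ∧ xs j ∉ Bs i) →
          n ≤ N - 1 := by
  classical
  set E := EuclideanSpace ℝ (Fin d) with hE
  refine ⟨11 ^ d, Nat.pow_pos (by norm_num), ?_⟩
  intro n x r B hr hB xs rs Bs hBs hint horder
  have hNpos : 1 ≤ 11 ^ d := Nat.one_le_pow _ _ (by norm_num)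
  suffices hmain : n + 1 ≤ 11 ^ d by omega
  -- basic distance facts
  have fact1 : ∀ i, rs i ≤ dist (xs i) x := by
    intro i
    have hx : x ∉ Bs i := (hint i).2.2
    rcases (hBs i).2 with h' | h'
    · rw [h', mem_ball, dist_comm] at hx
      exact not_lt.1 hx
    · rw [h', mem_closedBall, dist_comm] at hx
      exact (not_le.1 hx).le
  have fact2 : ∀ i, dist (xs i) x ≤ rs i + r := by
    intro i
    obtain ⟨y, hyB, hyBi⟩ := (hint i).2.1
    have h1 : dist y x ≤ r := by
      rcases hB with h' | h' <;> rw [h'] at hyB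
      · exact (mem_ball.1 hyB).le
      · exact mem_closedBall.1 hyB
    have h2 : dist y (xs i) ≤ rs i := by
      rcases (hBs i).2 with h' | h' <;> rw [h'] at hyBi
      · exact (mem_ball.1 hyBi).le
      · exact mem_closedBall.1 hyBi
    calc dist (xs i) x ≤ dist (xs i) y + dist y x := dist_triangle _ _ _
      _ ≤ rs i + r := by rw [dist_comm (xs i) y]; exact add_le_add h2 h1
  have fact3 : ∀ i j : Fin n, i < j → rs i ≤ dist (xs i) (xs j) := by
    intro i j hij
    have hx : xs j ∉ Bs i := (horder i j hij).2
    rcases (hBs i).2 with h' | h'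
    · rw [h', mem_ball, dist_comm] at hx
      exact not_lt.1 hx
    · rw [h', mem_closedBall, dist_comm] at hx
      exact (not_le.1 hx).le
  have fact4 : ∀ i, r ≤ (8 / 7) * rs i := by
    intro i
    have := (hint i).1
    linarith
  -- build the satellite configuration
  let c : Fin (n + 1) → E := fun i => if h : (i : ℕ) < n then xs ⟨i, h⟩ else x
  let ρ : Fin (n + 1) → ℝ := fun i => if h : (i : ℕ) < n then rs ⟨i, h⟩ else r
  have hclast : c (Fin.last n) = x := by simp [c]
  have hρlast : ρ (Fin.last n) = r := by simp [ρ]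
  have key : ∀ i j : Fin (n + 1), i < j →
      ρ i ≤ dist (c i) (c j) ∧ ρ j ≤ 8 / 7 * ρ i := by
    intro i j hij
    have hij' : (i : ℕ) < (j : ℕ) := hij
    have hi : (i : ℕ) < n := by omega
    by_cases hj : (j : ℕ) < n
    · have h5 := horder ⟨i, hi⟩ ⟨j, hj⟩ (by exact hij')
      have h6 := fact3 ⟨i, hi⟩ ⟨j, hj⟩ (by exact hij')
      simp only [c, ρ, dif_pos hi, dif_pos hj]
      exact ⟨h6, by linarith [h5.1]⟩
    · simp only [c, ρ, dif_pos hi, dif_neg hj]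
      exact ⟨fact1 ⟨i, hi⟩, fact4 ⟨i, hi⟩⟩
  let a : Besicovitch.SatelliteConfig E n (8 / 7) :=
    { c := c
      r := ρ
      rpos := by
        intro i
        simp only [ρ]
        split_ifs with h
        · exact (hBs ⟨i, h⟩).1
        · exact hr
      h := by
        intro i j hij
        rcases lt_or_gt_of_ne hij with h' | h'
        · exact Or.inl (key i j h')
        · exact Or.inr (key j i h')
      hlast := by
        intro i hi
        exact key i (Fin.last n) hi
      inter := by
        intro i hi
        have hi' : (i : ℕ) < n := hi
        rw [hclast, hρlast]
        simp only [c, ρ, dif_pos hi']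
        exact fact2 ⟨i, hi'⟩ }
  obtain ⟨c', hc'norm, hc'sep⟩ :=
    a.centerAndRescale.exists_normalized a.centerAndRescale_center a.centerAndRescale_radius
      (by norm_num : (1 : ℝ) ≤ 8 / 7) (4 / 7) (by norm_num) (by norm_num)
  have hinj : Function.Injective c' := by
    intro i j hcij
    by_contra hne
    have h9 : 1 - 4 / 7 ≤ ‖c' i - c' j‖ := hc'sep hne
    rw [hcij, sub_self, norm_zero] at h9
    norm_num at h9
  have hcard : (Finset.image c' Finset.univ).card = n + 1 := by
    rw [Finset.card_image_of_injective _ hinj, Finset.card_univ, Fintype.card_fin]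
  have hbound := my_card_le_of_separated (Finset.image c' Finset.univ)
    (by
      intro z hz
      obtain ⟨i, _, rfl⟩ := Finset.mem_image.1 hz
      exact hc'norm i)
    (by
      intro z hz w hw hzw
      obtain ⟨i, _, rfl⟩ := Finset.mem_image.1 hz
      obtain ⟨j, _, rfl⟩ := Finset.mem_image.1 hw
      have hne : i ≠ j := fun h => hzw (by rw [h])
      have h9 : 1 - 4 / 7 ≤ ‖c' i - c' j‖ := hc'sep hne
      linarith)
  rw [hcard] at hbound
  have hrank : Module.finrank ℝ E = d := finrank_euclideanSpace_fin
  rwa [hrank] at hbound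
end
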